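/- arXiv:2112.13438 — 9 statements merged into one kernel-verified Lean document; each statement's English description precedes it below -/
import Mathlib

section
/- If A ⊆ ℝⁿ has Lebesgue measure zero, then the chromatic number of ℝⁿ (with respect to unit distance) equals the chromatic number of ℝⁿ \ A; that is, any proper coloring of ℝⁿ \ A avoiding monochromatic pairs at distance 1 with k colors yields χ(ℝⁿ) ≤ k. -/
/-!
Finitely many translates of a null set are null, so every finite set of points has a translate
avoiding `A`. Translation preserves unit distances, hence `c` composed with that translation
properly colours every finite unit-distance graph, and de Bruijn–Erdős compactness
(`SimpleGraph.nonempty_hom_of_forall_finite_subgraph_hom`) colours the whole space.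
-/

open MeasureTheory

def unitDistanceGraph (E : Type*) [PseudoMetricSpace E] : SimpleGraph E where
  Adj x y := dist x y = 1
  symm := ⟨fun x y h => by rwa [dist_comm]⟩
  loopless := ⟨fun x h => by simp at h⟩

theorem exists_add_notMem_of_measure_zero {G : Type*} [MeasurableSpace G] [AddGroup G]
    [MeasurableAdd G] {μ : Measure G} [μ.IsAddLeftInvariant] [NeZero μ] {s A : Set G}
    (hs : s.Countable) (hA : μ A = 0) : ∃ t, ∀ x ∈ s, x + t ∉ A := by
  have hnull : μ (⋃ x ∈ s, (x + ·) ⁻¹' A) = 0 :=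
    (measure_biUnion_null_iff hs).2 fun x _ => (measure_preimage_add μ x A).trans hA
  obtain ⟨t, ht⟩ := (measure_eq_zero_iff_ae_notMem.1 hnull).exists
  exact ⟨t, fun x hx hxt => ht (Set.mem_biUnion hx hxt)⟩

theorem unitDistanceGraph.nonempty_coloring_of_proper_off_null {E α : Type*}
    [NormedAddCommGroup E] [MeasurableSpace E] [MeasurableAdd E] {μ : Measure E}
    [μ.IsAddLeftInvariant] [NeZero μ] [Finite α] {A : Set E} (hA : μ A = 0) (c : E → α)
    (hc : ∀ x ∉ A, ∀ y ∉ A, dist x y = 1 → c x ≠ c y) :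
    Nonempty ((unitDistanceGraph E).Coloring α) := by
  refine SimpleGraph.nonempty_hom_of_forall_finite_subgraph_hom fun G' hfin => ?_
  have : Nonempty (G'.coe.Coloring α) := by
    obtain ⟨t, ht⟩ := exists_add_notMem_of_measure_zero (μ := μ) hfin.countable hA
    refine ⟨⟨fun v => c (v.1 + t), fun {u v} huv => ?_⟩⟩
    have hd : dist (u.1 + t) (v.1 + t) = 1 := (dist_add_right _ _ _).trans (G'.adj_sub huv)
    exact hc _ (ht u.1 u.2) _ (ht v.1 v.2) hd
  exact this.some

/-- If `A ⊆ ℝⁿ` has Lebesgue measure zero, then any proper coloring of `ℝⁿ \ A`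
(no two points of `ℝⁿ \ A` at distance 1 share a color) with `k` colors yields a
proper coloring of all of `ℝⁿ` with `k` colors, i.e. `χ(ℝⁿ) ≤ k`. -/
theorem chromatic_number_measure_zero_removal
    (n k : ℕ) (A : Set (EuclideanSpace ℝ (Fin n)))
    (hA : MeasureTheory.volume A = 0)
    (c : EuclideanSpace ℝ (Fin n) → Fin k)
    (hc : ∀ x ∉ A, ∀ y ∉ A, dist x y = 1 → c x ≠ c y) :
    ∃ c' : EuclideanSpace ℝ (Fin n) → Fin k,
      ∀ x y : EuclideanSpace ℝ (Fin n), dist x y = 1 → c' x ≠ c' y := by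
  obtain ⟨C⟩ := unitDistanceGraph.nonempty_coloring_of_proper_off_null hA c hc
  exact ⟨C, fun _ _ hxy => C.valid (G := unitDistanceGraph _) hxy⟩
end

section
/- Let G be a finite unit-distance graph embedded in ℝⁿ with χ(G) = χ(ℝⁿ), and suppose c is a proper coloring of ℝⁿ \ A. If for every x in the open unit ball B(0,1) the translate x + G contains a point of A, then the open unit ball is covered by the finitely many sets ((v + B(0,1)) ∩ A) − v for v a vertex of G; in particular A cannot have Lebesgue measure zero. -/
open Pointwise MeasureTheory

section
variable {α : Type*} [AddCommGroup α]

theorem subset_biUnion_sub_image_vadd_inter {s A G : Set α}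
    (h : ∀ x ∈ s, ∃ v ∈ G, x + v ∈ A) :
    s ⊆ ⋃ v ∈ G, (· - v) '' ((v +ᵥ s) ∩ A) := by
  intro x hx
  obtain ⟨v, hv, hxv⟩ := h x hx
  exact Set.mem_biUnion hv ⟨x + v, ⟨⟨x, hx, add_comm v x⟩, hxv⟩, add_sub_cancel_right x v⟩

theorem measure_biUnion_sub_image_vadd_inter_null [MeasurableSpace α] {μ : Measure α}
    [VAddInvariantMeasure α α μ] {A G : Set α} (hG : G.Countable) (hA : μ A = 0) (s : Set α) :
    μ (⋃ v ∈ G, (· - v) '' ((v +ᵥ s) ∩ A)) = 0 := by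
  refine (measure_biUnion_null_iff hG).2 fun v _ =>
    measure_mono_null ?_ (measure_vadd_null hA (-v))
  rintro _ ⟨p, ⟨-, hp⟩, rfl⟩
  exact ⟨p, hp, (sub_eq_neg_add p v).symm⟩

end

theorem ball_covered_by_translates_of_A_general
    (n : ℕ) (G : Finset (EuclideanSpace ℝ (Fin n)))
    (A : Set (EuclideanSpace ℝ (Fin n)))
    -- every translate x + G with x in the open unit ball contains a point of A
    (htrans : ∀ x ∈ Metric.ball (0 : EuclideanSpace ℝ (Fin n)) 1,
      ∃ v ∈ G, x + v ∈ A) :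
    (Metric.ball (0 : EuclideanSpace ℝ (Fin n)) 1 ⊆
      ⋃ v ∈ G, (fun p => p - v) '' ((v +ᵥ Metric.ball (0 : EuclideanSpace ℝ (Fin n)) 1) ∩ A))
    ∧ MeasureTheory.volume A ≠ 0 := by
  have hcover := subset_biUnion_sub_image_vadd_inter htrans
  refine ⟨hcover, fun hA => ?_⟩
  have hball := measure_mono_null hcover
    (measure_biUnion_sub_image_vadd_inter_null G.countable_toSet hA _)
  exact (Metric.measure_ball_pos volume _ one_pos).ne' hball

/-- Let `G` be a finite unit-distance graph (a finite set of points) embedded in `ℝⁿ`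
whose chromatic number equals that of `ℝⁿ`, and let `c` be a proper coloring of `ℝⁿ \ A`
with `k` colors. If for every `x` in the open unit ball `B(0,1)` the translate `x + G`
meets `A`, then the open unit ball is covered by the sets `((v + B(0,1)) ∩ A) − v` for
`v ∈ G`; in particular `A` cannot have Lebesgue measure zero. -/
theorem ball_covered_by_translates_of_A
    (n k : ℕ) (G : Finset (EuclideanSpace ℝ (Fin n)))
    (A : Set (EuclideanSpace ℝ (Fin n)))
    -- χ(G) = χ(ℝⁿ): for every number of colors, G is properly colorable iff ℝⁿ is
    (hGchi : ∀ m : ℕ,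
      (∃ g : EuclideanSpace ℝ (Fin n) → Fin m,
        ∀ u ∈ G, ∀ w ∈ G, dist u w = 1 → g u ≠ g w) ↔
      (∃ g : EuclideanSpace ℝ (Fin n) → Fin m,
        ∀ u w : EuclideanSpace ℝ (Fin n), dist u w = 1 → g u ≠ g w))
    -- c is a proper coloring of ℝⁿ \ A
    (c : EuclideanSpace ℝ (Fin n) → Fin k)
    (hc : ∀ x ∉ A, ∀ y ∉ A, dist x y = 1 → c x ≠ c y)
    -- every translate x + G with x in the open unit ball contains a point of A
    (htrans : ∀ x ∈ Metric.ball (0 : EuclideanSpace ℝ (Fin n)) 1,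
      ∃ v ∈ G, x + v ∈ A) :
    (Metric.ball (0 : EuclideanSpace ℝ (Fin n)) 1 ⊆
      ⋃ v ∈ G, (fun p => p - v) '' ((v +ᵥ Metric.ball (0 : EuclideanSpace ℝ (Fin n)) 1) ∩ A))
    ∧ MeasureTheory.volume A ≠ 0 :=
  ball_covered_by_translates_of_A_general n G A htrans
end

section
/- For a full rank lattice Λ in ℝⁿ with covering radius R, the Voronoi cell V equals the intersection of the half-spaces {x : x·z ≤ |z|²/2} over only those nonzero z ∈ Λ with |z| ≤ 2R. -/
/-!
If `‖z‖ > 2R`, a lattice point `w` within `R` of `z / 2` splits `z = w + (z - w)` into two lattice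
vectors with `‖w‖² + ‖z - w‖² < ‖z‖²` (parallelogram law). Adding the half-space inequalities for
`w` and `z - w` gives the one for `z`, so by induction on the norm — well founded because the
lattice is discrete — the long vectors impose no further constraint on the Voronoi cell.
-/

open scoped RealInnerProductSpace
open Metric

theorem Set.induction_on_norm {E : Type*} [SeminormedAddGroup E] {S : Set E}
    (hfin : ∀ r, (closedBall (0 : E) r ∩ S).Finite) {P : E → Prop}
    (h : ∀ z ∈ S, (∀ w ∈ S, ‖w‖ < ‖z‖ → P w) → P z) : ∀ z ∈ S, P z := by
  intro z hz
  induction hn : (closedBall (0 : E) ‖z‖ ∩ S).ncard using Nat.strong_induction_on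
    generalizing z with
  | _ n ih =>
    refine h z hz fun w hw hlt => ih _ ?_ w hw rfl
    rw [← hn]
    refine Set.ncard_lt_ncard ⟨Set.inter_subset_inter_left _
      (closedBall_subset_closedBall hlt.le), fun hsub => ?_⟩ (hfin _)
    have hz_mem := (hsub ⟨mem_closedBall_zero_iff.2 le_rfl, hz⟩).1
    rw [mem_closedBall_zero_iff] at hz_mem
    exact hlt.not_ge hz_mem

section InnerProductSpace

variable {E : Type*} [NormedAddCommGroup E] [InnerProductSpace ℝ E]

def voronoiCell (L : Set E) : Set E :=
  {x | ∀ z ∈ L, ‖x‖ ≤ ‖x - z‖}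

theorem norm_le_norm_sub_iff_real_inner_le (x z : E) :
    ‖x‖ ≤ ‖x - z‖ ↔ ⟪x, z⟫ ≤ ‖z‖ ^ 2 / 2 := by
  rw [← sq_le_sq₀ (norm_nonneg _) (norm_nonneg _), norm_sub_sq_real]
  constructor <;> intro h <;> linarith

theorem norm_sq_add_norm_sub_sq_lt {z w : E} {R : ℝ} (hw : dist ((1 / 2 : ℝ) • z) w ≤ R)
    (hz : 2 * R < ‖z‖) : ‖w‖ ^ 2 + ‖z - w‖ ^ 2 < ‖z‖ ^ 2 := by
  set a := (1 / 2 : ℝ) • z - w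
  have hw_eq : w = (1 / 2 : ℝ) • z - a := by simp [a]
  have hzw_eq : z - w = (1 / 2 : ℝ) • z + a := by
    simp only [a]
    module
  have ha : ‖a‖ ≤ R := by rwa [dist_eq_norm] at hw
  have hhalf : ‖(1 / 2 : ℝ) • z‖ = ‖z‖ / 2 := by
    rw [norm_smul]
    norm_num
    ring
  have hpar := parallelogram_law_with_norm ℝ ((1 / 2 : ℝ) • z) a
  rw [hzw_eq, hw_eq, add_comm (‖_‖ ^ 2), hpar, hhalf]
  nlinarith [norm_nonneg a]

theorem real_inner_le_half_norm_sq_of_short {L : AddSubgroup E} {R : ℝ}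
    (hfin : ∀ r, (closedBall (0 : E) r ∩ L).Finite) (hcover : ∀ y : E, ∃ w ∈ L, dist y w ≤ R)
    {x : E} (hx : ∀ z ∈ L, z ≠ 0 → ‖z‖ ≤ 2 * R → ⟪x, z⟫ ≤ ‖z‖ ^ 2 / 2) :
    ∀ z ∈ L, ⟪x, z⟫ ≤ ‖z‖ ^ 2 / 2 := by
  refine Set.induction_on_norm hfin fun z hz ih => ?_
  by_cases hshort : ‖z‖ ≤ 2 * R
  · rcases eq_or_ne z 0 with rfl | hz0
    · simp
    · exact hx z hz hz0 hshort
  obtain ⟨w, hwL, hw⟩ := hcover ((1 / 2 : ℝ) • z)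
  have hsplit := norm_sq_add_norm_sub_sq_lt hw (not_le.1 hshort)
  have hw_lt : ‖w‖ < ‖z‖ :=
    (sq_lt_sq₀ (norm_nonneg _) (norm_nonneg _)).1 (by nlinarith [sq_nonneg ‖z - w‖])
  have hzw_lt : ‖z - w‖ < ‖z‖ :=
    (sq_lt_sq₀ (norm_nonneg _) (norm_nonneg _)).1 (by nlinarith [sq_nonneg ‖w‖])
  calc ⟪x, z⟫ = ⟪x, w⟫ + ⟪x, z - w⟫ := by rw [← inner_add_right, add_sub_cancel]
    _ ≤ ‖w‖ ^ 2 / 2 + ‖z - w‖ ^ 2 / 2 :=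
      add_le_add (ih w hwL hw_lt) (ih _ (L.sub_mem hz hwL) hzw_lt)
    _ ≤ ‖z‖ ^ 2 / 2 := by linarith

theorem voronoiCell_eq_iInter_short {L : AddSubgroup E} {R : ℝ}
    (hfin : ∀ r, (closedBall (0 : E) r ∩ L).Finite) (hcover : ∀ y : E, ∃ w ∈ L, dist y w ≤ R) :
    voronoiCell (L : Set E) =
      ⋂ z ∈ {z : E | z ∈ L ∧ z ≠ 0 ∧ ‖z‖ ≤ 2 * R}, {x : E | ⟪x, z⟫ ≤ ‖z‖ ^ 2 / 2} := by
  ext x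
  simp only [voronoiCell, Set.mem_ofPred_eq, Set.mem_iInter, norm_le_norm_sub_iff_real_inner_le]
  exact ⟨fun hx z hz => hx z hz.1,
    fun hx => real_inner_le_half_norm_sq_of_short hfin hcover fun z hz hz0 hzR => hx z ⟨hz, hz0, hzR⟩⟩

end InnerProductSpace

/-- For a full rank lattice `Λ ⊆ ℝⁿ` with covering radius `R`, the Voronoi cell about
the origin equals the intersection of the half-spaces `{x : ⟪x, z⟫ ≤ ‖z‖²/2}` over only
those nonzero `z ∈ Λ` with `‖z‖ ≤ 2R`. -/
theorem voronoi_cell_eq_iInter_halfspaces_short_vectors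
    (n : ℕ) (b : Module.Basis (Fin n) ℝ (EuclideanSpace ℝ (Fin n)))
    (Λ : Set (EuclideanSpace ℝ (Fin n)))
    (hΛ : Λ = (Submodule.span ℤ (Set.range b) : Submodule ℤ (EuclideanSpace ℝ (Fin n))))
    (R : ℝ)
    (hR : IsLeast {r : ℝ | ∀ x : EuclideanSpace ℝ (Fin n), ∃ z ∈ Λ, dist x z ≤ r} R) :
    {x : EuclideanSpace ℝ (Fin n) | ∀ z ∈ Λ, ‖x‖ ≤ ‖x - z‖} =
      ⋂ z ∈ {z : EuclideanSpace ℝ (Fin n) | z ∈ Λ ∧ z ≠ 0 ∧ ‖z‖ ≤ 2 * R},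
        {x : EuclideanSpace ℝ (Fin n) | ⟪x, z⟫ ≤ ‖z‖ ^ 2 / 2} := by
  subst hΛ
  exact voronoiCell_eq_iInter_short (L := (Submodule.span ℤ (Set.range b)).toAddSubgroup)
    (fun _ => ZSpan.setFinite_inter b isBounded_closedBall) hR.1
end

section
/- If there exists a full rank lattice Λ in ℝⁿ whose covering radius is at most twice its packing radius, then χ(ℝⁿ) ≤ 3ⁿ. -/
/-!
Scale so that the unit distance becomes `4r`, and colour a point by the class modulo `3Λ` of
its nearest lattice point, ties broken lexicographically in the coordinates of the basis. If
`x` and `y` at distance `4r` receive the same colour, their selected lattice points are `z` and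
`z + 3w` with `w ∈ Λ`. If `w ≠ 0`, then `‖w‖ ≥ 2r` and the Voronoi cells of `z` and `z + 3w` are
at distance at least `2‖w‖ ≥ 4r`, with equality only where `x` ties between `z` and `z + w` and
`y` between `z + 3w` and `z + 2w`; the tie-breaking rule cannot choose `z` and `z + 3w` in both
ties. If `w = 0`, then `x` and `y` are antipodal on the sphere of radius `R = 2r` about `z`,
and a point whose distance to the lattice equals the covering radius has a second nearest
lattice point, which again contradicts the tie-breaking rule.
-/

open Submodule Metric Set
open scoped RealInnerProductSpace

section NearestPoint

variable {α : Type*} [PseudoMetricSpace α]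

def IsNearestPoint (s : Set α) (x z : α) : Prop :=
  z ∈ s ∧ ∀ p ∈ s, dist x z ≤ dist x p

theorem IsNearestPoint.dist_le {s : Set α} {x z : α} {ρ : ℝ} (hz : IsNearestPoint s x z)
    (hcov : ∃ q ∈ s, dist x q ≤ ρ) : dist x z ≤ ρ :=
  let ⟨q, hq, hxq⟩ := hcov
  (hz.2 q hq).trans hxq

theorem exists_isNearestPoint_forall_le {β : Type*} [LinearOrder β] (f : α → β) {s : Set α}
    (hs : ∀ x ρ, (closedBall x ρ ∩ s).Finite) (hne : s.Nonempty) (x : α) :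
    ∃ z, IsNearestPoint s x z ∧ ∀ p, IsNearestPoint s x p → f z ≤ f p := by
  obtain ⟨z₀, hz₀⟩ := hne
  have hz₀K : z₀ ∈ closedBall x (dist x z₀) ∩ s := ⟨mem_closedBall.2 (dist_comm _ _).le, hz₀⟩
  obtain ⟨z₁, ⟨-, hz₁⟩, hmin⟩ := Set.exists_min_image _ (dist x) (hs x (dist x z₀)) ⟨z₀, hz₀K⟩
  have hnear₁ : IsNearestPoint s x z₁ := by
    refine ⟨hz₁, fun p hp => ?_⟩
    by_cases hpK : dist x p ≤ dist x z₀
    · exact hmin p ⟨mem_closedBall.2 (by rwa [dist_comm]), hp⟩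
    · exact (hmin z₀ hz₀K).trans (not_le.1 hpK).le
  have hfin : {p | IsNearestPoint s x p}.Finite :=
    (hs x (dist x z₀)).subset fun p hp =>
      ⟨mem_closedBall.2 (by rw [dist_comm]; exact hp.2 z₀ hz₀), hp.1⟩
  exact Set.exists_min_image _ f hfin ⟨z₁, hnear₁⟩

end NearestPoint

section CoveringTie

variable {E : Type*} [NormedAddCommGroup E] [NormedSpace ℝ E] {s : Set E} {ρ : ℝ}

/-- Pushing `x` away from `z` leaves the ball of radius `ρ` about `z`, so the covering
property yields points of `s` other than `z` almost as close to `x` as `z` is. -/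
theorem exists_mem_ne_dist_le_add (hcov : ∀ x, ∃ q ∈ s, dist x q ≤ ρ) (hρ : 0 < ρ)
    {x z : E} (hxz : dist x z = ρ) {ε : ℝ} (hε : 0 < ε) :
    ∃ q ∈ s, q ≠ z ∧ dist x q ≤ ρ + ε := by
  set x' := x + (ε / ρ) • (x - z)
  have hx'z : dist x' z = ρ + ε := by
    rw [dist_eq_norm,
      show x' - z = (1 + ε / ρ) • (x - z) by simp only [x', add_smul, one_smul]; abel, norm_smul, ← dist_eq_norm, hxz, Real.norm_of_nonneg (by positivity)]
    field_simp
  have hxx' : dist x x' = ε := by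
    rw [dist_eq_norm, show x - x' = -((ε / ρ) • (x - z)) by simp only [x']; abel, norm_neg,
      norm_smul, ← dist_eq_norm, hxz, Real.norm_of_nonneg (by positivity)]
    field_simp
  obtain ⟨q, hq, hx'q⟩ := hcov x'
  refine ⟨q, hq, ?_, ?_⟩
  · rintro rfl
    linarith
  · linarith [dist_triangle x x' q]

theorem IsNearestPoint.exists_ne (hs : ∀ x ρ, (closedBall x ρ ∩ s).Finite)
    (hcov : ∀ x, ∃ q ∈ s, dist x q ≤ ρ) (hρ : 0 < ρ) {x z : E} (hz : IsNearestPoint s x z)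
    (hxz : dist x z = ρ) : ∃ p, IsNearestPoint s x p ∧ p ≠ z := by
  set T := (closedBall x (2 * ρ) ∩ s) \ {z}
  have mem_T {ε : ℝ} (hε : 0 < ε) (hερ : ε ≤ ρ) : ∃ q ∈ T, dist x q ≤ ρ + ε := by
    obtain ⟨q, hq, hqz, hxq⟩ := exists_mem_ne_dist_le_add hcov hρ hxz hε
    exact ⟨q, ⟨⟨mem_closedBall.2 (by rw [dist_comm]; linarith), hq⟩, hqz⟩, hxq⟩
  obtain ⟨q₀, hq₀, -⟩ := mem_T hρ le_rfl
  obtain ⟨p, ⟨⟨-, hp⟩, hpz⟩, hmin⟩ :=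
    Set.exists_min_image T (dist x) (hs x (2 * ρ)).sdiff ⟨q₀, hq₀⟩
  have hxp : dist x p ≤ ρ := le_of_forall_pos_le_add fun ε hε => by
    obtain ⟨q, hq, hxq⟩ := mem_T (lt_min hε hρ) (min_le_right ε ρ)
    linarith [hmin q hq, min_le_left ε ρ]
  exact ⟨p, ⟨hp, fun q hq => by linarith [hz.2 q hq]⟩, hpz⟩

end CoveringTie

section Voronoi

variable {E : Type*} [NormedAddCommGroup E] [InnerProductSpace ℝ E]

theorem dist_add_sq (x z w : E) :
    dist x (z + w) ^ 2 = dist x z ^ 2 - 2 * ⟪x - z, w⟫ + ‖w‖ ^ 2 := by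
  rw [dist_eq_norm, dist_eq_norm, ← norm_sub_sq_real, sub_add_eq_sub_sub]

/-- The half-space of points at least as close to `z` as to `z + w` and that of points at least
as close to `z' = z + 3 • w` as to `z' - w` are `2 * ‖w‖` apart, and points of them at exactly
that distance lie on both bisectors. -/
theorem dist_add_eq_and_dist_sub_eq_of_sub_eq_three_smul {x y z z' w : E}
    (hzz' : z' - z = (3 : ℝ) • w) (hx : dist x z ≤ dist x (z + w))
    (hy : dist y z' ≤ dist y (z' - w)) (hxy : dist x y ≤ 2 * ‖w‖) :
    dist x (z + w) = dist x z ∧ dist y (z' - w) = dist y z' := by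
  have hx2 := dist_add_sq x z w
  have hy2 := dist_add_sq y z' (-w)
  rw [← sub_eq_add_neg, norm_neg, inner_neg_right] at hy2
  have hx' := pow_le_pow_left₀ dist_nonneg hx 2
  have hy' := pow_le_pow_left₀ dist_nonneg hy 2
  have hyx : ⟪y - x, w⟫ = 3 * ‖w‖ ^ 2 + ⟪y - z', w⟫ - ⟪x - z, w⟫ := by
    rw [show y - x = (3 : ℝ) • w + (y - z') - (x - z) by rw [← hzz']; abel, inner_sub_left,
      inner_add_left, real_inner_smul_left, real_inner_self_eq_norm_sq]
  have hcs : ⟪y - x, w⟫ ≤ 2 * ‖w‖ ^ 2 := by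
    have := real_inner_le_norm (y - x) w
    rw [← dist_eq_norm, dist_comm] at this
    nlinarith [norm_nonneg w]
  constructor
  · exact (pow_left_inj₀ dist_nonneg dist_nonneg two_ne_zero).1 (by linarith)
  · exact (pow_left_inj₀ dist_nonneg dist_nonneg two_ne_zero).1 (by linarith)

end Voronoi

section Lattice

variable {E : Type*} [NormedAddCommGroup E] [InnerProductSpace ℝ E]
  {ι : Type*} (b : Module.Basis ι ℝ E)

theorem floor_repr_of_mem_span {z : E} (hz : z ∈ span ℤ (range b)) (i : ι) :
    (⌊b.repr z i⌋ : ℝ) = b.repr z i := by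
  obtain ⟨k, hk⟩ := (b.mem_span_iff_repr_mem ℤ z).1 hz i
  rw [← hk, eq_intCast, Int.floor_intCast]

variable [Fintype ι]

theorem exists_mem_span_sub_eq_smul_of_floor_repr_eq (m : ℕ) {z z' : E}
    (hz : z ∈ span ℤ (range b)) (hz' : z' ∈ span ℤ (range b))
    (h : ∀ i, (⌊b.repr z i⌋ : ZMod m) = ⌊b.repr z' i⌋) :
    ∃ w ∈ span ℤ (range b), z' - z = (m : ℝ) • w := by
  choose k hk using fun i => (ZMod.intCast_eq_intCast_iff_dvd_sub _ _ m).1 (h i)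
  set w := b.equivFun.symm fun i => (k i : ℝ)
  have hw (i : ι) : b.repr w i = k i := by rw [← b.equivFun_apply, b.equivFun.apply_symm_apply]
  refine ⟨w, (b.mem_span_iff_repr_mem ℤ w).2 fun i => ⟨k i, by rw [hw, eq_intCast]⟩,
    b.ext_elem fun i => ?_⟩
  have hki := congrArg (Int.cast : ℤ → ℝ) (hk i)
  push_cast at hki
  rw [map_sub, map_smul, Finsupp.sub_apply, Finsupp.smul_apply, smul_eq_mul, hw,
    ← floor_repr_of_mem_span b hz, ← floor_repr_of_mem_span b hz', hki]

theorem exists_pos_le_norm_of_mem_span :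
    ∃ ε > 0, ∀ v ∈ span ℤ (range b), v ≠ 0 → ε ≤ ‖v‖ := by
  obtain ⟨ε, hε, h⟩ := isOpen_singleton_iff.1 (isOpen_discrete ({0} : Set (span ℤ (range b))))
  refine ⟨ε, hε, fun v hv hv0 => not_lt.1 fun hlt => hv0 ?_⟩
  simpa using h ⟨v, hv⟩ (by simpa using hlt)

theorem finite_closedBall_inter_span [FiniteDimensional ℝ E] (x : E) (ρ : ℝ) :
    (closedBall x ρ ∩ span ℤ (range b)).Finite :=
  ZSpan.setFinite_inter b isBounded_closedBall

variable [LinearOrder ι]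

theorem eq_zero_of_toLex_le_add_of_toLex_le_sub {z z' w : E}
    (h : toLex (b.equivFun z) ≤ toLex (b.equivFun (z + w)))
    (h' : toLex (b.equivFun z') ≤ toLex (b.equivFun (z' - w))) : w = 0 := by
  rw [map_add, toLex_add, le_add_iff_nonneg_right] at h
  rw [map_sub, toLex_sub, le_sub_self_iff] at h'
  exact b.equivFun.map_eq_zero_iff.1 (toLex.injective (le_antisymm h' h))

end Lattice

section LexMinNearest

variable {E : Type*} [NormedAddCommGroup E] [InnerProductSpace ℝ E]
  {ι : Type*} [Fintype ι] [LinearOrder ι] (b : Module.Basis ι ℝ E)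

def IsLexMinNearest (x z : E) : Prop :=
  IsNearestPoint (span ℤ (range b) : Set E) x z ∧
    ∀ p, IsNearestPoint (span ℤ (range b) : Set E) x p →
      toLex (b.equivFun z) ≤ toLex (b.equivFun p)

theorem exists_isLexMinNearest [FiniteDimensional ℝ E] [WellFoundedLT ι] (x : E) :
    ∃ z, IsLexMinNearest b x z :=
  exists_isNearestPoint_forall_le _ (finite_closedBall_inter_span b) ⟨0, zero_mem _⟩ x

variable {b} {ρ : ℝ} (hcov : ∀ x, ∃ q ∈ span ℤ (range b), dist x q ≤ ρ)
include hcov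

/-- If `z` is the selected point of both `x` and `y` and `dist x y ≥ 2 * ρ`, then `z` is the
midpoint of `x` and `y` at distance `ρ` from both. A second nearest point `p` of `x` reflects to
the second nearest point `2 • z - p` of `y`, and the two cannot both lose the lexicographic
comparison with `z`. -/
theorem IsLexMinNearest.eq_of_two_mul_le_dist [FiniteDimensional ℝ E] {x y z : E}
    (hx : IsLexMinNearest b x z) (hy : IsLexMinNearest b y z) (hxy : 2 * ρ ≤ dist x y) :
    x = y := by
  by_contra hne
  have hxz := hx.1.dist_le (hcov x)
  have hyz := hy.1.dist_le (hcov y)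
  have htri := dist_triangle_right x y z
  have hxz' : dist x z = dist x y / 2 := by linarith
  have hyz' : dist z y = dist x y / 2 := by linarith [dist_comm z y]
  have hρ : 0 < ρ := by linarith [dist_pos.2 hne]
  have hy_eq : y = z - (x - z) := by
    rw [← (midpoint_eq_iff' (R := ℝ)).1 (eq_midpoint_of_dist_eq_half hxz' hyz').symm,
      Equiv.pointReflection_apply, vsub_eq_sub, vadd_eq_add]
    abel
  obtain ⟨p, hp, hpz⟩ :=
    hx.1.exists_ne (finite_closedBall_inter_span b) hcov hρ (by linarith)
  have hp' : IsNearestPoint (span ℤ (range b) : Set E) y (z - (p - z)) := by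
    refine ⟨sub_mem hx.1.1 (sub_mem hp.1 hx.1.1), fun q hq => ?_⟩
    have hyp : dist y (z - (p - z)) = dist x p := by rw [hy_eq, dist_sub_left, dist_sub_right]
    linarith [hp.2 z hx.1.1, hy.1.2 q hq, dist_comm z y]
  refine hpz (sub_eq_zero.1 (eq_zero_of_toLex_le_add_of_toLex_le_sub b
    (hx.2 _ ?_) (hy.2 _ hp')))
  rwa [add_sub_cancel]

theorem IsLexMinNearest.sub_ne_three_smul [FiniteDimensional ℝ E]
    (hpack : ∀ v ∈ span ℤ (range b), v ≠ 0 → ρ ≤ ‖v‖) (hρ : 0 < ρ) {x y z z' w : E}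
    (hx : IsLexMinNearest b x z) (hy : IsLexMinNearest b y z') (hxy : dist x y = 2 * ρ)
    (hw : w ∈ span ℤ (range b)) : z' - z ≠ (3 : ℝ) • w := by
  intro hzz'
  rcases eq_or_ne w 0 with rfl | hw0
  · rw [smul_zero, sub_eq_zero] at hzz'
    subst hzz'
    have := hx.eq_of_two_mul_le_dist hcov hy hxy.ge
    subst this
    linarith [dist_self x]
  · obtain ⟨hxw, hyw⟩ := dist_add_eq_and_dist_sub_eq_of_sub_eq_three_smul hzz'
      (hx.1.2 _ (add_mem hx.1.1 hw)) (hy.1.2 _ (sub_mem hy.1.1 hw))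
      (by linarith [hpack w hw hw0])
    refine hw0 (eq_zero_of_toLex_le_add_of_toLex_le_sub b (hx.2 _ ⟨add_mem hx.1.1 hw, ?_⟩)
      (hy.2 _ ⟨sub_mem hy.1.1 hw, ?_⟩))
    · exact fun q hq => hxw ▸ hx.1.2 q hq
    · exact fun q hq => hyw ▸ hy.1.2 q hq

end LexMinNearest

theorem exists_coloring_of_covering_le_packing {E : Type*} [NormedAddCommGroup E]
    [InnerProductSpace ℝ E] [FiniteDimensional ℝ E] {ι : Type*} [Fintype ι] [LinearOrder ι]
    [WellFoundedLT ι] (b : Module.Basis ι ℝ E) {ρ : ℝ} (hρ : 0 < ρ)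
    (hpack : ∀ v ∈ span ℤ (range b), v ≠ 0 → ρ ≤ ‖v‖)
    (hcov : ∀ x, ∃ q ∈ span ℤ (range b), dist x q ≤ ρ) :
    ∃ c : E → ι → ZMod 3, ∀ x y, dist x y = 2 * ρ → c x ≠ c y := by
  choose sel hsel using exists_isLexMinNearest b
  refine ⟨fun x i => (⌊b.repr (sel x) i⌋ : ZMod 3), fun x y hxy hc => ?_⟩
  obtain ⟨w, hw, hzz'⟩ := exists_mem_span_sub_eq_smul_of_floor_repr_eq b 3 (hsel x).1.1
    (hsel y).1.1 (congrFun hc)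
  exact (hsel x).sub_ne_three_smul hcov hpack hρ (hsel y) hxy hw (mod_cast hzz')

/-- If there exists a full rank lattice `Λ` in `ℝⁿ` whose covering radius is at most
twice its packing radius, then `χ(ℝⁿ) ≤ 3ⁿ`. -/
theorem chromatic_le_three_pow_of_covering_packing_two
    (n : ℕ)
    (h : ∃ (b : Module.Basis (Fin n) ℝ (EuclideanSpace ℝ (Fin n)))
           (Λ : Set (EuclideanSpace ℝ (Fin n))) (r R : ℝ),
      Λ = (Submodule.span ℤ (Set.range b) : Submodule ℤ (EuclideanSpace ℝ (Fin n)))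
      -- r is the packing radius of Λ
      ∧ IsGreatest {s : ℝ | ∀ v ∈ Λ, v ≠ 0 → 2 * s ≤ ‖v‖} r
      -- R is the covering radius of Λ
      ∧ IsLeast {s : ℝ | ∀ x : EuclideanSpace ℝ (Fin n), ∃ z ∈ Λ, dist x z ≤ s} R
      -- covering-packing ratio at most 2
      ∧ R ≤ 2 * r) :
    ∃ c : EuclideanSpace ℝ (Fin n) → Fin (3 ^ n),
      ∀ x y : EuclideanSpace ℝ (Fin n), dist x y = 1 → c x ≠ c y := by
  obtain ⟨b, Λ, r, R, rfl, hr, hR, hRr⟩ := h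
  have hr0 : 0 < r := by
    obtain ⟨ε, hε, hmin⟩ := exists_pos_le_norm_of_mem_span b
    linarith [hr.2 (show ε / 2 ∈ _ from fun v hv hv0 => by linarith [hmin v hv hv0])]
  obtain ⟨c, hc⟩ := exists_coloring_of_covering_le_packing b (by positivity : 0 < 2 * r) hr.1
    fun x => (hR.1 x).imp fun z hz => ⟨hz.1, hz.2.trans hRr⟩
  let e : (Fin n → ZMod 3) ≃ Fin (3 ^ n) := Fintype.equivFinOfCardEq (by simp)
  refine ⟨fun x => e (c ((4 * r) • x)), fun x y hxy => e.injective.ne (hc _ _ ?_)⟩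
  rw [dist_smul₀, hxy, Real.norm_of_nonneg (by positivity)]
  ring
end

section
/- Let W be a finite family of unit vectors in ℝᵐ, let G be the finite group of isometries of the subspace X generated by the reflections R_w (w ∈ W), and let K = {x ∈ X : x·w ≥ 0 for all w ∈ W} have nonempty relative interior in X. Then for every x ∈ X there exists g ∈ G with g(x) ∈ K. -/
open scoped RealInnerProductSpace

/-
Fix `z` in the interior of `K`. If `w ∈ W` takes a negative value somewhere on `X`, then `⟪z, w⟫`
cannot vanish, since moving `z` slightly in that direction would leave `K`; so `⟪z, w⟫ > 0`.
Given `x`, choose `g ∈ G` maximising `⟪g x, z⟫` over the finite group. If `⟪g x, w⟫ < 0` for some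
`w ∈ W`, then `⟪R_w (g x), z⟫ = ⟪g x, z⟫ - 2 ⟪g x, w⟫ ⟪w, z⟫ > ⟪g x, z⟫`, contradicting
maximality; hence `g x ∈ K`.
-/

section HalfSpace

variable {V : Type*} [AddCommGroup V] [Module ℝ V] [TopologicalSpace V]
  [ContinuousAdd V] [ContinuousSMul ℝ V]

theorem pos_of_mem_interior_setOf_nonneg {f : V →ₗ[ℝ] ℝ} {y z : V}
    (hz : z ∈ interior {x | 0 ≤ f x}) (hy : f y < 0) : 0 < f z := by
  have hpath : Filter.Tendsto (fun t : ℝ => z + t • y) (nhdsWithin 0 (Set.Ioi 0)) (nhds z) := by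
    have : Continuous fun t : ℝ => z + t • y := by fun_prop
    simpa using (this.tendsto 0).mono_left nhdsWithin_le_nhds
  obtain ⟨t, hmem, ht⟩ :=
    ((hpath.eventually (isOpen_interior.mem_nhds hz)).and self_mem_nhdsWithin).exists
  have hnonneg : 0 ≤ f z + t * f y := by simpa using interior_subset hmem
  nlinarith

end HalfSpace

section Reflection

variable {E : Type*} [NormedAddCommGroup E] [InnerProductSpace ℝ E]

theorem reflection_orthogonal_singleton_apply_of_norm_eq_one {w : E} (hw : ‖w‖ = 1) (x : E) :
    (ℝ ∙ w)ᗮ.reflection x = x - (2 * ⟪x, w⟫) • w := by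
  rw [Submodule.reflection_orthogonal_apply, Submodule.reflection_apply,
    Submodule.starProjection_unit_singleton ℝ hw, real_inner_comm]
  module

theorem Submodule.map_reflection_eq_self {K X : Submodule ℝ E} [K.HasOrthogonalProjection]
    (hX : ∀ x ∈ X, K.reflection x ∈ X) : X.map (K.reflection : E →ₗ[ℝ] E) = X :=
  le_antisymm (Submodule.map_le_iff_le_comap.mpr hX)
    fun x hx => ⟨K.reflection x, hX x hx, K.reflection_reflection x⟩

theorem exists_linearIsometryEquiv_eq_sub_two_inner_smul {X : Submodule ℝ E} {w : E}
    (hw : ‖w‖ = 1) (hX : ∀ x ∈ X, x - (2 * ⟪x, w⟫) • w ∈ X) :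
    ∃ s : X ≃ₗᵢ[ℝ] X, ∀ x : X, (s x : E) = x - (2 * ⟪(x : E), w⟫) • w := by
  simp only [← reflection_orthogonal_singleton_apply_of_norm_eq_one hw] at hX ⊢
  exact ⟨(LinearIsometryEquiv.submoduleMap X _).trans
    (LinearIsometryEquiv.ofEq _ _ (Submodule.map_reflection_eq_self hX)), fun _ => rfl⟩

end Reflection

/-- Let `W` be a finite family of unit vectors in `ℝᵐ`, let `X` be a subspace invariant
under each reflection `R_w` (`w ∈ W`), let `G` be the finite group of isometries of `X`
generated by the restrictions of the reflections `R_w`, and let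
`K = {x ∈ X : x·w ≥ 0 for all w ∈ W}` have nonempty relative interior in `X`.
Then for every `x ∈ X` there exists `g ∈ G` with `g(x) ∈ K`. -/
theorem exists_reflection_group_elt_into_cone
    (m : ℕ) (X : Submodule ℝ (EuclideanSpace ℝ (Fin m)))
    (W : Finset (EuclideanSpace ℝ (Fin m)))
    (hW : ∀ w ∈ W, ‖w‖ = 1)
    -- X is invariant under each reflection R_w
    (hXinv : ∀ w ∈ W, ∀ x ∈ X, x - (2 * ⟪x, w⟫) • w ∈ X)
    (G : Subgroup (X ≃ₗᵢ[ℝ] X))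
    (hG : G = Subgroup.closure
      {g : X ≃ₗᵢ[ℝ] X | ∃ w ∈ W, ∀ x : X, (g x : EuclideanSpace ℝ (Fin m))
        = (x : EuclideanSpace ℝ (Fin m)) - (2 * ⟪(x : EuclideanSpace ℝ (Fin m)), w⟫) • w})
    (hGfin : Finite G)
    (K : Set X)
    (hK : K = {x : X | ∀ w ∈ W, 0 ≤ ⟪(x : EuclideanSpace ℝ (Fin m)), w⟫})
    -- K has nonempty relative interior in X
    (hKint : (interior K).Nonempty) :
    ∀ x : X, ∃ g ∈ G, g x ∈ K := by
  obtain ⟨z, hz⟩ := hKint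
  have hz_pos : ∀ w ∈ W, ∀ y : X, ⟪(y : EuclideanSpace ℝ (Fin m)), w⟫ < 0 →
      0 < ⟪(z : EuclideanSpace ℝ (Fin m)), w⟫ := by
    intro w hw y hy
    have hKw : K ⊆ {x | 0 ≤ (innerₗ _ w ∘ₗ X.subtype) x} := by
      subst hK
      exact fun x hx => by simpa [real_inner_comm] using hx w hw
    simpa [real_inner_comm] using
      pos_of_mem_interior_setOf_nonneg (interior_mono hKw hz) (by simpa [real_inner_comm] using hy)
  have hrefl : ∀ w ∈ W, ∃ s ∈ G, ∀ x : X, (s x : EuclideanSpace ℝ (Fin m))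
      = (x : EuclideanSpace ℝ (Fin m)) - (2 * ⟪(x : EuclideanSpace ℝ (Fin m)), w⟫) • w := by
    intro w hw
    obtain ⟨s, hs⟩ := exists_linearIsometryEquiv_eq_sub_two_inner_smul (hW w hw) (hXinv w hw)
    exact ⟨s, hG ▸ Subgroup.subset_closure ⟨w, hw, hs⟩, hs⟩
  intro x
  obtain ⟨g, hg_max⟩ := Finite.exists_max fun g : G =>
    ⟪((g : X ≃ₗᵢ[ℝ] X) x : EuclideanSpace ℝ (Fin m)), z⟫
  refine ⟨g, g.2, hK ▸ fun w hw => ?_⟩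
  by_contra! hneg
  obtain ⟨s, hsG, hs⟩ := hrefl w hw
  have hle := hg_max (⟨s, hsG⟩ * g)
  rw [Subgroup.coe_mul, LinearIsometryEquiv.coe_mul, Function.comp_apply, hs, inner_sub_left,
    real_inner_smul_left] at hle
  nlinarith [hz_pos w hw _ hneg, real_inner_comm (w : EuclideanSpace ℝ (Fin m)) z]
end

section
/- With Λ, X, W, G, K, V, V₁, R as above, V₁ = ⋂ over z ∈ K ∩ Λ \ {0} with |z| ≤ 2R of {x ∈ K : x·z ≤ |z|²/2}; i.e., in the fundamental cone K it suffices to intersect with half-spaces determined by lattice vectors lying in K of length at most 2R. -/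
open scoped RealInnerProductSpace

/-!
Let `x ∈ K` satisfy the inequalities for the short lattice vectors lying in `K`. Among the lattice
vectors of a given length, one maximizing `⟪x, ·⟫` and then `⟪x₀, ·⟫` (with `x₀` interior to `K`)
lies in `K`, since reflecting it in a wall it violates would increase this lexicographic value;
so `x` satisfies the inequality for every lattice vector of length at most `2R`. A shortest
violating lattice vector `z`, necessarily longer than `2R`, splits as `u + (z - u)` with `u` a
lattice point within `R` of `z / 2`: both pieces are shorter than `z`, and by the parallelogram
law their inequalities imply the one for `z`.
-/

theorem LinearIndependent.discreteTopology_span_int {E ι : Type*} [NormedAddCommGroup E]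
    [NormedSpace ℝ E] [FiniteDimensional ℝ E] {v : ι → E} (hv : LinearIndependent ℝ v) :
    DiscreteTopology (Submodule.span ℤ (Set.range v)).toAddSubgroup := by
  have hs := hv.linearIndepOn_id
  exact DiscreteTopology.of_subset
    (inferInstance : DiscreteTopology (Submodule.span ℤ (Set.range (Module.Basis.extend hs))))
    (Submodule.span_mono (by simpa using hs.subset_extend (Set.subset_univ _)))

theorem AddSubgroup.finite_closedBall_inter {E : Type*} [NormedAddCommGroup E] [ProperSpace E]
    (L : AddSubgroup E) [DiscreteTopology L] (c : ℝ) :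
    (Metric.closedBall 0 c ∩ (L : Set E)).Finite :=
  Metric.finite_isBounded_inter_isClosed (isDiscrete_iff_discreteTopology.mpr ‹_›)
    Metric.isBounded_closedBall L.isClosed_of_discrete

section InnerProductSpace

variable {E : Type*} [NormedAddCommGroup E] [InnerProductSpace ℝ E]

theorem inner_le_half_norm_sq_iff_norm_le_norm_sub (x z : E) :
    ⟪x, z⟫ ≤ ‖z‖ ^ 2 / 2 ↔ ‖x‖ ≤ ‖x - z‖ := by
  rw [← sq_le_sq₀ (norm_nonneg _) (norm_nonneg _), norm_sub_sq_real]
  constructor <;> intro h <;> linarith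

theorem norm_lt_and_norm_sub_lt_of_two_mul_norm_lt {z u : E}
    (h : 2 * ‖(2⁻¹ : ℝ) • z - u‖ < ‖z‖) : ‖u‖ < ‖z‖ ∧ ‖z - u‖ < ‖z‖ := by
  have hhalf : ‖(2⁻¹ : ℝ) • z‖ = ‖z‖ / 2 := by
    rw [norm_smul, Real.norm_of_nonneg (by norm_num)]; ring
  constructor
  · calc ‖u‖ = ‖(2⁻¹ : ℝ) • z - ((2⁻¹ : ℝ) • z - u)‖ := by rw [sub_sub_cancel]
      _ ≤ ‖(2⁻¹ : ℝ) • z‖ + ‖(2⁻¹ : ℝ) • z - u‖ := norm_sub_le _ _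
      _ < ‖z‖ := by linarith
  · calc ‖z - u‖ = ‖(2⁻¹ : ℝ) • z + ((2⁻¹ : ℝ) • z - u)‖ := by
          rw [← add_sub_assoc, ← add_smul]; norm_num
      _ ≤ ‖(2⁻¹ : ℝ) • z‖ + ‖(2⁻¹ : ℝ) • z - u‖ := norm_add_le _ _
      _ < ‖z‖ := by linarith

theorem inner_le_half_norm_sq_of_inner_le_of_inner_sub_le {x z u : E}
    (h : 2 * ‖(2⁻¹ : ℝ) • z - u‖ ≤ ‖z‖) (hu : ⟪x, u⟫ ≤ ‖u‖ ^ 2 / 2)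
    (hzu : ⟪x, z - u⟫ ≤ ‖z - u‖ ^ 2 / 2) : ⟪x, z⟫ ≤ ‖z‖ ^ 2 / 2 := by
  have hmid := norm_sub_sq_real ((2⁻¹ : ℝ) • z) u
  rw [norm_smul, real_inner_smul_left, Real.norm_of_nonneg (by norm_num)] at hmid
  calc ⟪x, z⟫ = ⟪x, u⟫ + ⟪x, z - u⟫ := by rw [inner_sub_right]; ring
    _ ≤ (‖u‖ ^ 2 + ‖z - u‖ ^ 2) / 2 := by linarith
    _ = ‖(2⁻¹ : ℝ) • z - u‖ ^ 2 + ‖z‖ ^ 2 / 4 := by rw [norm_sub_sq_real]; linarith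
    _ ≤ ‖z‖ ^ 2 / 2 := by nlinarith [norm_nonneg ((2⁻¹ : ℝ) • z - u)]

theorem inner_pos_of_forall_dist_lt_inner_nonneg {X : Submodule ℝ E} {x₀ w y : E} {ε : ℝ}
    (hε : 0 < ε) (hx₀ : x₀ ∈ X) (hball : ∀ y ∈ X, dist y x₀ < ε → 0 ≤ ⟪y, w⟫) (hy : y ∈ X)
    (hyw : ⟪y, w⟫ < 0) : 0 < ⟪x₀, w⟫ := by
  obtain ⟨s, hs, hsy⟩ := exists_pos_mul_lt hε ‖y‖
  have hdist : dist (x₀ + s • y) x₀ < ε := by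
    rwa [dist_eq_norm, add_sub_cancel_left, norm_smul, Real.norm_of_nonneg hs.le, mul_comm]
  have := hball _ (X.add_mem hx₀ (X.smul_mem s hy)) hdist
  rw [inner_add_left, real_inner_smul_left] at this
  nlinarith

variable [ProperSpace E] {L : AddSubgroup E} [DiscreteTopology L]

theorem AddSubgroup.inner_le_half_norm_sq_of_forall_norm_le_two_mul {R : ℝ}
    (hcov : ∀ z ∈ L, ∃ u ∈ L, dist ((2⁻¹ : ℝ) • z) u ≤ R) {x : E}
    (hx : ∀ z ∈ L, ‖z‖ ≤ 2 * R → ⟪x, z⟫ ≤ ‖z‖ ^ 2 / 2) {z : E} (hz : z ∈ L) :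
    ⟪x, z⟫ ≤ ‖z‖ ^ 2 / 2 := by
  by_contra! hzx
  have hfin : {z ∈ (L : Set E) | ‖z‖ ^ 2 / 2 < ⟪x, z⟫}.Finite := by
    refine (L.finite_closedBall_inter (2 * ‖x‖)).subset fun z ⟨hzL, hzx⟩ ↦ ⟨?_, hzL⟩
    have := real_inner_le_norm x z
    rw [mem_closedBall_zero_iff]
    nlinarith [norm_nonneg z]
  obtain ⟨z, ⟨hzL, hzx⟩, hmin⟩ := Set.exists_min_image _ norm hfin ⟨z, hz, hzx⟩
  have hshorter : ∀ y ∈ L, ‖y‖ < ‖z‖ → ⟪x, y⟫ ≤ ‖y‖ ^ 2 / 2 := fun y hyL hyz ↦ by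
    by_contra! hyx
    exact (hmin y ⟨hyL, hyx⟩).not_gt hyz
  have hzR : 2 * R < ‖z‖ := by
    by_contra! hzR
    exact (hx z hzL hzR).not_gt hzx
  obtain ⟨u, huL, hu⟩ := hcov z hzL
  rw [dist_eq_norm] at hu
  have hsplit : 2 * ‖(2⁻¹ : ℝ) • z - u‖ < ‖z‖ := by linarith
  have hlt := norm_lt_and_norm_sub_lt_of_two_mul_norm_lt hsplit
  exact hzx.not_ge <| inner_le_half_norm_sq_of_inner_le_of_inner_sub_le hsplit.le
    (hshorter u huL hlt.1) (hshorter _ (L.sub_mem hzL huL) hlt.2)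

theorem AddSubgroup.exists_mem_forall_inner_nonneg_norm_eq_inner_le {W : Set E}
    (hW : ∀ w ∈ W, ‖w‖ = 1) (hrefl : ∀ w ∈ W, ∀ z ∈ L, z - (2 * ⟪z, w⟫) • w ∈ L) {x₀ : E}
    (hx₀ : ∀ w ∈ W, ∀ y ∈ L, ⟪y, w⟫ < 0 → 0 < ⟪x₀, w⟫) {x : E} (hx : ∀ w ∈ W, 0 ≤ ⟪x, w⟫)
    {z : E} (hz : z ∈ L) :
    ∃ y ∈ L, (∀ w ∈ W, 0 ≤ ⟪y, w⟫) ∧ ‖y‖ = ‖z‖ ∧ ⟪x, z⟫ ≤ ⟪x, y⟫ := by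
  have hfin : {y ∈ (L : Set E) | ‖y‖ = ‖z‖}.Finite :=
    (L.finite_closedBall_inter ‖z‖).subset fun y ⟨hyL, hyz⟩ ↦
      ⟨mem_closedBall_zero_iff.2 hyz.le, hyL⟩
  obtain ⟨y, ⟨hyL, hyz⟩, hmax⟩ := Set.exists_max_image _
    (fun y ↦ toLex (⟪x, y⟫, ⟪x₀, y⟫)) hfin ⟨z, hz, rfl⟩
  refine ⟨y, hyL, fun w hw ↦ ?_, hyz, Prod.Lex.monotone_fst _ _ (hmax z ⟨hz, rfl⟩)⟩
  by_contra! hyw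
  have hreflect : ∀ a, ⟪a, y - (2 * ⟪y, w⟫) • w⟫ = ⟪a, y⟫ - 2 * ⟪y, w⟫ * ⟪a, w⟫ := fun a ↦ by
    rw [inner_sub_right, real_inner_smul_right]
  have hnorm : ‖y - (2 * ⟪y, w⟫) • w‖ = ‖y‖ := by
    rw [← sq_eq_sq₀ (norm_nonneg _) (norm_nonneg _), norm_sub_sq_real, real_inner_smul_right,
      norm_smul, Real.norm_eq_abs, hW w hw, mul_pow, sq_abs]
    ring
  refine (hmax _ ⟨hrefl w hw y hyL, hnorm.trans hyz⟩).not_gt (Prod.Lex.toLex_strictMono ?_)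
  refine Prod.mk_lt_mk_of_le_of_lt ?_ ?_
  · rw [hreflect]; nlinarith [hx w hw]
  · rw [hreflect]; nlinarith [hx₀ w hw y hyL hyw]

end InnerProductSpace

/-- With `Λ, X, W, K, V, V₁, R` as in the fundamental cone setting, `V₁` equals the set
of `x ∈ K` satisfying `x·z ≤ ‖z‖²/2` for every nonzero lattice vector `z ∈ K ∩ Λ` with
`‖z‖ ≤ 2R`: in the fundamental cone it suffices to intersect with half-spaces determined
by lattice vectors lying in `K` of length at most `2R`. -/
theorem voronoi_cone_eq_iInter_halfspaces_in_cone
    (m n : ℕ) (v : Fin n → EuclideanSpace ℝ (Fin m))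
    (hv : LinearIndependent ℝ v)
    (Λ : Set (EuclideanSpace ℝ (Fin m)))
    (hΛ : Λ = (Submodule.span ℤ (Set.range v) : Submodule ℤ (EuclideanSpace ℝ (Fin m))))
    (X : Submodule ℝ (EuclideanSpace ℝ (Fin m)))
    (hX : X = Submodule.span ℝ (Set.range v))
    (W : Finset (EuclideanSpace ℝ (Fin m)))
    (hW : ∀ w ∈ W, ‖w‖ = 1)
    -- each reflection R_w maps Λ onto itself
    (hrefl : ∀ w ∈ W, ∀ z ∈ Λ, z - (2 * ⟪z, w⟫) • w ∈ Λ)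
    (K : Set (EuclideanSpace ℝ (Fin m)))
    (hK : K = {x | x ∈ X ∧ ∀ w ∈ W, 0 ≤ ⟪x, w⟫})
    -- K has nonempty relative interior in X
    (hKint : ∃ x ∈ K, ∃ ε > (0 : ℝ), ∀ y ∈ X, dist y x < ε → y ∈ K)
    (V V₁ : Set (EuclideanSpace ℝ (Fin m)))
    (hV : V = {x | x ∈ X ∧ ∀ z ∈ Λ, ‖x‖ ≤ ‖x - z‖})
    (hV₁ : V₁ = K ∩ V)
    (R : ℝ)
    -- R is the covering radius of Λ (within X)
    (hR : IsLeast {r : ℝ | ∀ x ∈ X, ∃ z ∈ Λ, dist x z ≤ r} R) :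
    V₁ = {x ∈ K | ∀ z ∈ Λ, z ∈ K → z ≠ 0 → ‖z‖ ≤ 2 * R → ⟪x, z⟫ ≤ ‖z‖ ^ 2 / 2} := by
  subst hΛ hX hK hV hV₁
  set L := (Submodule.span ℤ (Set.range v)).toAddSubgroup
  have : DiscreteTopology L := hv.discreteTopology_span_int
  have hLX : ∀ z ∈ L, z ∈ Submodule.span ℝ (Set.range v) := fun z hz ↦
    Submodule.span_le_restrictScalars ℤ ℝ _ hz
  obtain ⟨x₀, ⟨hx₀X, -⟩, ε, hε, hball⟩ := hKint
  have hx₀ : ∀ w ∈ (W : Set _), ∀ y ∈ L, ⟪y, w⟫ < 0 → 0 < ⟪x₀, w⟫ := fun w hw y hy ↦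
    inner_pos_of_forall_dist_lt_inner_nonneg hε hx₀X (fun y' hy' hd ↦ (hball y' hy' hd).2 w hw)
      (hLX y hy)
  ext x
  simp only [Set.mem_inter_iff, Set.mem_ofPred_eq, ← inner_le_half_norm_sq_iff_norm_le_norm_sub]
  refine ⟨fun ⟨hxK, _, hxV⟩ ↦ ⟨hxK, fun z hz _ _ _ ↦ hxV z hz⟩,
    fun ⟨⟨hxX, hxW⟩, hx⟩ ↦ ⟨⟨hxX, hxW⟩, hxX, fun z hz ↦ ?_⟩⟩
  refine L.inner_le_half_norm_sq_of_forall_norm_le_two_mul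
    (fun z hz ↦ hR.1 _ (Submodule.smul_mem _ _ (hLX z hz))) (fun z hz hzR ↦ ?_) hz
  obtain ⟨y, hyL, hyW, hyz, hxy⟩ :=
    L.exists_mem_forall_inner_nonneg_norm_eq_inner_le hW hrefl hx₀ hxW hz
  rcases eq_or_ne z 0 with rfl | hz0
  · simp
  have hy0 : y ≠ 0 := by rwa [← norm_ne_zero_iff, hyz, norm_ne_zero_iff]
  calc ⟪x, z⟫ ≤ ⟪x, y⟫ := hxy
    _ ≤ ‖y‖ ^ 2 / 2 := hx y hyL ⟨hLX y hyL, hyW⟩ hy0 (hyz ▸ hzR)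
    _ = ‖z‖ ^ 2 / 2 := by rw [hyz]
end

section
/- If there exists an Eisenstein lattice Λ in ℂⁿ whose covering radius is at most 3/2 times its packing radius, then χ(ℝ²ⁿ) ≤ 7ⁿ. -/
/-!
Color a point of `ℂⁿ` by the class, modulo the index-`7ⁿ` sublattice `(3 + ω)Λ`, of a nearest
point of `Λ`. Two points with the same nearest lattice point are at distance at most `2R`.
If `x` and `y` have distinct nearest points `z_x`, `z_y` of the same class, then
`z_y - z_x = (3 + ω)μ` with `0 ≠ μ ∈ Λ`. Pair `y - x` with `(5 + ω)μ = 4μ + (1 + ω)μ`: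
the nearest-point inequalities `2 Re⟪x - z_x, w⟫ ≤ ‖w‖²` for `w = μ, (1 + ω)μ` (both of norm
`‖μ‖`), together with `Re ((3 + ω)‾(5 + ω)) = 12` and `‖5 + ω‖ = √21`, give
`7‖μ‖ ≤ √21 ‖y - x‖`, hence `‖y - x‖ ≥ (2√21/3) r`. Since `3 < 14/√21`, the hypothesis
`R ≤ 3r/2` leaves room for a distance `t` with `2R < t < (2√21/3) r` that no color class
realizes; rescaling `t` to `1` gives the coloring of `ℝ²ⁿ ≅ ℂⁿ`.
-/

open Complex ComplexConjugate

local notation "ω" => Complex.exp (2 * Real.pi * Complex.I / 3)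

lemma IsClosed.exists_forall_dist_le {X : Type*} [MetricSpace X] [ProperSpace X] {s : Set X}
    (hs : IsClosed s) (hne : s.Nonempty) (x : X) : ∃ z ∈ s, ∀ u ∈ s, dist x z ≤ dist x u := by
  obtain ⟨z, hz, hdist⟩ := hs.exists_infDist_eq_dist hne x
  exact ⟨z, hz, fun u hu => hdist ▸ Metric.infDist_le_dist_of_mem hu⟩

lemma AddSubgroup.exists_pos_forall_le_norm {F : Type*} [NormedAddCommGroup F]
    (L : AddSubgroup F) [DiscreteTopology L] : ∃ δ > 0, ∀ u ∈ L, u ≠ 0 → δ ≤ ‖u‖ := by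
  obtain ⟨δ, hδ, hball⟩ := Metric.isOpen_iff.mp (isOpen_discrete ({0} : Set L)) 0 rfl
  refine ⟨δ, hδ, fun u hu hu0 => not_lt.mp fun hlt => hu0 ?_⟩
  have : (⟨u, hu⟩ : L) ∈ Metric.ball 0 δ := by simpa using hlt
  simpa using hball this

lemma two_mul_re_inner_le_of_forall_dist_le {E : Type*} [NormedAddCommGroup E]
    [InnerProductSpace ℂ E] {L : AddSubgroup E} {x z w : E} (hz : z ∈ L)
    (hnear : ∀ u ∈ L, dist x z ≤ dist x u) (hw : w ∈ L) :
    2 * (inner ℂ (x - z) w).re ≤ ‖w‖ ^ 2 := by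
  have h := hnear (z + w) (L.add_mem hz hw)
  rw [dist_eq_norm, dist_eq_norm, ← sub_sub] at h
  have hsq := norm_sub_sq (𝕜 := ℂ) (x - z) w
  rw [RCLike.re_to_complex] at hsq
  nlinarith [pow_le_pow_left₀ (norm_nonneg _) h 2]

lemma exists_fin_coloring_of_forall_dist_ne {E F κ : Type*} [NormedAddCommGroup E]
    [NormedSpace ℝ E] [NormedAddCommGroup F] [NormedSpace ℝ F] [Fintype κ] (e : F →ₗᵢ[ℝ] E)
    {t : ℝ} (ht : 0 < t) {c : E → κ} (hc : ∀ x y, c x = c y → dist x y ≠ t) :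
    ∃ c' : F → Fin (Fintype.card κ), ∀ x y, dist x y = 1 → c' x ≠ c' y := by
  classical
  refine ⟨fun x => Fintype.equivFin κ (c (t • e x)), fun x y hxy hcxy => ?_⟩
  refine hc _ _ ((Fintype.equivFin κ).injective hcxy) ?_
  rw [dist_smul₀, e.dist_map, hxy, Real.norm_of_nonneg ht.le, mul_one]

namespace Eisenstein

lemma omega_eq : ω = ⟨-1 / 2, √3 / 2⟩ := by
  have h : 2 * (Real.pi : ℂ) * I / 3 = ((Real.pi - Real.pi / 3 : ℝ) : ℂ) * I := by
    push_cast; ring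
  rw [h, exp_mul_I, ← ofReal_cos, ← ofReal_sin, Real.cos_pi_sub, Real.sin_pi_sub,
    Real.cos_pi_div_three, Real.sin_pi_div_three]
  apply Complex.ext <;> norm_num

lemma sqrt_three_sq : √3 ^ 2 = 3 := Real.sq_sqrt (by norm_num)

lemma omega_sq : ω ^ 2 = -1 - ω := by
  rw [omega_eq]
  apply Complex.ext <;>
    simp only [pow_two, mul_re, mul_im, sub_re, sub_im, neg_re, neg_im, one_re, one_im,
      neg_zero, zero_sub] <;>
    nlinarith [sqrt_three_sq]

lemma norm_one_add_omega : ‖1 + ω‖ = 1 := by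
  rw [omega_eq, norm_def, normSq_apply]
  simp only [add_re, one_re, add_im, one_im, zero_add, Real.sqrt_eq_one]
  nlinarith [sqrt_three_sq]

lemma norm_five_add_omega : ‖5 + ω‖ = √21 := by
  rw [omega_eq, norm_def, normSq_apply]
  congr 1
  simp only [add_re, re_ofNat, add_im, im_ofNat, zero_add]
  nlinarith [sqrt_three_sq]

lemma re_conj_three_add_omega_mul_five_add_omega : (conj (3 + ω) * (5 + ω)).re = 12 := by
  rw [omega_eq]
  simp only [map_add, mul_re, add_re, conj_re, re_ofNat, add_im, conj_im, im_ofNat, neg_zero,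
    zero_add, neg_mul, sub_neg_eq_add]
  nlinarith [sqrt_three_sq]

lemma three_mul_sqrt_21_lt_14 : 3 * √21 < 14 := by
  nlinarith [Real.sq_sqrt (show (0 : ℝ) ≤ 21 by norm_num), Real.sqrt_nonneg 21]

lemma linearIndependent_one_omega : LinearIndependent ℝ ![1, ω] := by
  rw [LinearIndependent.pair_iff]
  intro s t h
  rw [omega_eq] at h
  have hre := congrArg re h
  have him := congrArg im h
  simp only [real_smul, mul_one, add_re, ofReal_re, mul_re, ofReal_im, zero_mul, sub_zero,
    zero_re, add_im, mul_im, add_zero, zero_add, zero_im, mul_eq_zero, div_eq_zero_iff,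
    Nat.ofNat_nonneg, Real.sqrt_eq_zero, OfNat.ofNat_ne_zero, or_self, or_false] at hre him
  exact ⟨by simpa [him] using hre, him⟩

noncomputable def basisOneOmega : Module.Basis (Fin 2) ℝ ℂ :=
  basisOfLinearIndependentOfCardEqFinrank linearIndependent_one_omega (by simp)

lemma coe_basisOneOmega : ⇑basisOneOmega = ![1, ω] :=
  coe_basisOfLinearIndependentOfCardEqFinrank _ _

theorem seven_mul_norm_le_sqrt_21_mul_dist {E : Type*} [NormedAddCommGroup E]
    [InnerProductSpace ℂ E] {L : AddSubgroup E} (hL : ∀ u ∈ L, ω • u ∈ L)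
    {x y zx zy μ : E} (hzx : zx ∈ L) (hzy : zy ∈ L) (hμ : μ ∈ L)
    (hx : ∀ u ∈ L, dist x zx ≤ dist x u) (hy : ∀ u ∈ L, dist y zy ≤ dist y u)
    (hz : zy - zx = (3 + ω) • μ) : 7 * ‖μ‖ ≤ √21 * dist x y := by
  set w := (1 + ω) • μ
  have hw : w ∈ L := by simpa [w, add_smul] using L.add_mem hμ (hL μ hμ)
  have hnorm_w : ‖w‖ = ‖μ‖ := by rw [norm_smul, norm_one_add_omega, one_mul]
  have hsplit : ∀ a : E,
      (inner ℂ a ((5 + ω) • μ)).re = 4 * (inner ℂ a μ).re + (inner ℂ a w).re := by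
    intro a
    rw [show (5 + ω) • μ = (4 : ℂ) • μ + w by rw [← add_smul]; ring_nf, inner_add_right,
      inner_smul_right, add_re, mul_re, re_ofNat, im_ofNat, zero_mul, sub_zero]
  have hx1 := two_mul_re_inner_le_of_forall_dist_le hzx hx hμ
  have hx2 := two_mul_re_inner_le_of_forall_dist_le hzx hx hw
  have hy1 := two_mul_re_inner_le_of_forall_dist_le hzy hy (L.neg_mem hμ)
  have hy2 := two_mul_re_inner_le_of_forall_dist_le hzy hy (L.neg_mem hw)
  rw [inner_neg_right, neg_re, norm_neg] at hy1 hy2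
  rw [hnorm_w] at hx2 hy2
  have hzz : (inner ℂ (zy - zx) ((5 + ω) • μ)).re = 12 * ‖μ‖ ^ 2 := by
    rw [hz, inner_smul_left, inner_smul_right, inner_self_eq_norm_sq_to_K, ← mul_assoc,
      RCLike.ofReal_eq_complex_ofReal, ← ofReal_pow, re_mul_ofReal,
      re_conj_three_add_omega_mul_five_add_omega]
  have hcs : (inner ℂ (y - x) ((5 + ω) • μ)).re ≤ dist x y * (√21 * ‖μ‖) := by
    rw [dist_comm, dist_eq_norm, ← norm_five_add_omega, ← norm_smul]
    exact re_inner_le_norm (𝕜 := ℂ) _ _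
  rw [show y - x = (zy - zx) + (y - zy) - (x - zx) by abel, inner_sub_left, inner_add_left,
    sub_re, add_re, hzz, hsplit, hsplit] at hcs
  have hmain : 7 * ‖μ‖ * ‖μ‖ ≤ √21 * dist x y * ‖μ‖ := by nlinarith
  rcases (norm_nonneg μ).eq_or_lt with h0 | hpos
  · rw [← h0, mul_zero]; positivity
  · exact le_of_mul_le_mul_right hmain hpos

section Lattice

variable {ι E : Type*} [Fintype ι]

section Module

variable [AddCommGroup E] [Module ℂ E]

def eisensteinLattice (v : ι → E) : Set E :=
  {x | ∃ a b : ι → ℤ, x = ∑ i, ((a i : ℂ) + (b i : ℂ) * ω) • v i}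

lemma eisensteinLattice_eq_span (v : Module.Basis ι ℂ E) :
    eisensteinLattice v = Submodule.span ℤ (Set.range (basisOneOmega.smulTower v)) := by
  have hsum : ∀ f : Fin 2 × ι → ℤ, ∑ p, f p • basisOneOmega.smulTower v p
      = ∑ i, ((f (0, i) : ℂ) + (f (1, i) : ℂ) * ω) • v i := by
    intro f
    simp only [Fintype.sum_prod_type, Fin.sum_univ_two, Module.Basis.smulTower_apply,
      coe_basisOneOmega]
    rw [← Finset.sum_add_distrib]
    refine Finset.sum_congr rfl fun i _ => ?_
    simp [add_smul, mul_smul, ← Int.cast_smul_eq_zsmul ℂ]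
  ext x
  rw [SetLike.mem_coe, Submodule.mem_span_range_iff_exists_fun]
  constructor
  · rintro ⟨a, b, rfl⟩
    exact ⟨fun p => ![a, b] p.1 p.2, by rw [hsum]; rfl⟩
  · rintro ⟨f, rfl⟩
    exact ⟨fun i => f (0, i), fun i => f (1, i), hsum f⟩

lemma omega_smul_mem_eisensteinLattice {v : ι → E} {x : E} (hx : x ∈ eisensteinLattice v) :
    ω • x ∈ eisensteinLattice v := by
  obtain ⟨a, b, rfl⟩ := hx
  refine ⟨fun i => -b i, fun i => a i - b i, ?_⟩
  rw [Finset.smul_sum]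
  refine Finset.sum_congr rfl fun i _ => ?_
  rw [smul_smul]
  congr 1
  push_cast
  linear_combination (b i : ℂ) * omega_sq

/-- Since `ω ≡ -3 [mod 3 + ω]` and `ℤ[ω]/(3 + ω) ≅ ℤ/7`, the class of `a + bω` modulo `3 + ω`
is `a - 3b mod 7`. -/
lemma exists_sub_eq_smul_of_modEq (v : ι → E) {a b a' b' : ι → ℤ}
    (h : ∀ i, a' i - 3 * b' i ≡ a i - 3 * b i [ZMOD 7]) :
    ∃ μ ∈ eisensteinLattice v, ∑ i, ((a' i : ℂ) + (b' i : ℂ) * ω) • v i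
      - ∑ i, ((a i : ℂ) + (b i : ℂ) * ω) • v i = (3 + ω) • μ := by
  choose e he using fun i => (h i).symm.dvd
  refine ⟨_, ⟨fun i => b' i - b i + 2 * e i, fun i => -e i, rfl⟩, ?_⟩
  rw [← Finset.sum_sub_distrib, Finset.smul_sum]
  refine Finset.sum_congr rfl fun i _ => ?_
  rw [smul_smul, ← sub_smul]
  congr 1
  have he' : ((a' i : ℂ) - 3 * b' i) - (a i - 3 * b i) = 7 * e i := by exact_mod_cast he i
  push_cast
  linear_combination he' + (e i : ℂ) * omega_sq

end Module

variable [NormedAddCommGroup E] [InnerProductSpace ℂ E]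

lemma exists_pos_forall_le_norm_eisensteinLattice (v : Module.Basis ι ℂ E) :
    ∃ δ > 0, ∀ u ∈ eisensteinLattice v, u ≠ 0 → δ ≤ ‖u‖ := by
  rw [eisensteinLattice_eq_span]
  exact (Submodule.span ℤ (Set.range (basisOneOmega.smulTower v))).toAddSubgroup
    |>.exists_pos_forall_le_norm

theorem exists_coloring_forall_dist_ne [FiniteDimensional ℂ E] (v : Module.Basis ι ℂ E)
    {r R t : ℝ} (hpack : ∀ u ∈ eisensteinLattice v, u ≠ 0 → 2 * r ≤ ‖u‖)
    (hcover : ∀ x, ∃ z ∈ eisensteinLattice v, dist x z ≤ R)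
    (hRt : 2 * R < t) (htr : √21 * t < 14 * r) :
    ∃ c : E → ι → ZMod 7, ∀ x y, c x = c y → dist x y ≠ t := by
  set L := (Submodule.span ℤ (Set.range (basisOneOmega.smulTower v))).toAddSubgroup
  have hΛ : ∀ u, u ∈ eisensteinLattice v ↔ u ∈ L := fun u => by
    rw [eisensteinLattice_eq_span]; rfl
  have hL : ∀ u ∈ L, ω • u ∈ L := fun u hu =>
    (hΛ _).mp (omega_smul_mem_eisensteinLattice ((hΛ u).mpr hu))
  have hnear : ∀ x, ∃ a b : ι → ℤ, ∀ u ∈ L,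
      dist x (∑ i, ((a i : ℂ) + (b i : ℂ) * ω) • v i) ≤ dist x u := by
    intro x
    obtain ⟨z, hz, hmin⟩ :=
      AddSubgroup.isClosed_of_discrete.exists_forall_dist_le ⟨0, L.zero_mem⟩ x
    obtain ⟨a, b, rfl⟩ := (hΛ z).mpr hz
    exact ⟨a, b, hmin⟩
  choose a b hab using hnear
  set z : E → E := fun x => ∑ i, ((a x i : ℂ) + (b x i : ℂ) * ω) • v i
  have hzL : ∀ x, z x ∈ L := fun x => (hΛ _).mp ⟨a x, b x, rfl⟩
  have hzR : ∀ x, dist x (z x) ≤ R := fun x => by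
    obtain ⟨w, hw, hxw⟩ := hcover x
    exact (hab x w ((hΛ w).mp hw)).trans hxw
  refine ⟨fun x i => ((a x i - 3 * b x i : ℤ) : ZMod 7), fun x y hxy hdist => ?_⟩
  by_cases hzz : z x = z y
  · have : dist x y ≤ 2 * R :=
      calc dist x y ≤ dist x (z x) + dist (z y) y := by rw [hzz]; exact dist_triangle _ _ _
        _ ≤ 2 * R := by rw [dist_comm (z y)]; linarith [hzR x, hzR y]
    linarith
  · have hmod : ∀ i, a y i - 3 * b y i ≡ a x i - 3 * b x i [ZMOD 7] := fun i =>
      ((ZMod.intCast_eq_intCast_iff _ _ _).mp (congrFun hxy i)).symm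
    obtain ⟨μ, hμ, hzμ⟩ := exists_sub_eq_smul_of_modEq (⇑v) hmod
    have hμ0 : μ ≠ 0 := by
      rintro rfl
      exact hzz (sub_eq_zero.mp (hzμ.trans (smul_zero _))).symm
    have hkey :=
      seven_mul_norm_le_sqrt_21_mul_dist hL (hzL x) (hzL y) ((hΛ μ).mp hμ) (hab x) (hab y) hzμ
    rw [hdist] at hkey
    linarith [hpack μ hμ hμ0]

end Lattice

end Eisenstein

open Eisenstein

/-- If there exists an Eisenstein lattice `Λ` in `ℂⁿ` (the `ℤ[ω]`-span of `n`
ℂ-linearly independent vectors, `ω = e^{2πi/3}`) whose covering radius is at most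
`3/2` times its packing radius, then `χ(ℝ²ⁿ) ≤ 7ⁿ`. -/
theorem chromatic_le_seven_pow_of_eisenstein_lattice
    (n : ℕ)
    (h : ∃ (v : Fin n → EuclideanSpace ℂ (Fin n)) (Λ : Set (EuclideanSpace ℂ (Fin n)))
           (r R : ℝ),
      LinearIndependent ℂ v
      ∧ Λ = {x | ∃ a b : Fin n → ℤ,
          x = ∑ i, (((a i : ℂ) + (b i : ℂ) * Complex.exp (2 * Real.pi * Complex.I / 3)) • v i)}
      -- r is the packing radius of Λ
      ∧ IsGreatest {s : ℝ | ∀ u ∈ Λ, u ≠ 0 → 2 * s ≤ ‖u‖} r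
      -- R is the covering radius of Λ
      ∧ IsLeast {s : ℝ | ∀ x : EuclideanSpace ℂ (Fin n), ∃ z ∈ Λ, dist x z ≤ s} R
      -- covering-packing ratio at most 3/2
      ∧ R ≤ (3 / 2) * r) :
    ∃ c : EuclideanSpace ℝ (Fin (2 * n)) → Fin (7 ^ n),
      ∀ x y : EuclideanSpace ℝ (Fin (2 * n)), dist x y = 1 → c x ≠ c y := by
  obtain ⟨v, Λ, r, R, hv, rfl, hr, hR, hRr⟩ := h
  set b := basisOfLinearIndependentOfCardEqFinrank' v hv (by simp)
  have hb : ⇑b = v := coe_basisOfLinearIndependentOfCardEqFinrank' v hv _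
  have hpack : ∀ u ∈ eisensteinLattice b, u ≠ 0 → 2 * r ≤ ‖u‖ := hb ▸ hr.1
  have hr0 : 0 < r := by
    obtain ⟨δ, hδ, hδu⟩ := exists_pos_forall_le_norm_eisensteinLattice b
    exact (half_pos hδ).trans_le (hr.2 fun u hu hu0 => by linarith [hδu u (hb ▸ hu) hu0])
  obtain ⟨t, h3rt, htr⟩ := exists_between (show 3 * r < 14 * r / √21 by
    rw [lt_div_iff₀ (by positivity)]; nlinarith [three_mul_sqrt_21_lt_14])
  rw [lt_div_iff₀ (by positivity)] at htr
  obtain ⟨c, hc⟩ :=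
    exists_coloring_forall_dist_ne b hpack (hb ▸ hR.1) (by linarith : 2 * R < t) (by linarith)
  have hdim : Module.finrank ℝ (EuclideanSpace ℂ (Fin n)) = 2 * n := by
    simp [finrank_real_of_complex]
  have := exists_fin_coloring_of_forall_dist_ne
    ((stdOrthonormalBasis ℝ _).reindex (finCongr hdim)).repr.symm.toLinearIsometry
    (by linarith) hc
  rwa [Fintype.card_fun, ZMod.card, Fintype.card_fin] at this
end

section
/- Let Λ₁ ⊆ ℝ^{n₁} and Λ₂ ⊆ ℝ^{n₂} be full rank lattices each with packing radius 1 and covering radii ρ₁, ρ₂ respectively, with n₁ ≥ n₂. Define the π/3-sum Λ = {(x + L(y)/2, (√3/2)y) : x ∈ Λ₁, y ∈ Λ₂} ⊆ ℝ^{n₁+n₂}, where L : ℝ^{n₂} → ℝ^{n₁} appends zeros. Then Λ is a full rank lattice with packing radius at least 1 and covering radius at most √(ρ₁² + (3/4)ρ₂²). -/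
/-!
The `π/3`-sum is the image of `Λ₁ × Λ₂` under the linear bijection
`(x, y) ↦ (x + L y / 2, (√3 / 2) y)`, so it is the `ℤ`-span of the image of the product basis.
The image of `(x, y)` has squared norm `‖x + L y / 2‖² + ¾ ‖y‖²`. As `L` is an isometry for
`n₂ ≤ n₁`, this equals `‖x‖² + ⟪x, L y⟫ + ‖y‖² ≥ ‖x‖² - ‖x‖ ‖y‖ + ‖y‖²`, which is at least `4`
when each of `x, y` is `0` or has norm at least `2`, and not both are `0`. For covering, first
approximate the second block by `y ∈ Λ₂`, then the sheared first block by `x ∈ Λ₁`.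
-/

namespace PiDivThreeSum

open EuclideanSpace

local notation "𝔼" n:max => EuclideanSpace ℝ (Fin n)

theorem norm_sq_finAddEquivProd_symm {m n : ℕ} (a : 𝔼 m) (b : 𝔼 n) :
    ‖finAddEquivProd.symm (a, b)‖ ^ 2 = ‖a‖ ^ 2 + ‖b‖ ^ 2 := by
  simp only [real_norm_sq_eq, Fin.sum_univ_add]
  simp

theorem span_range_basis_prod_map {K M N P : Type*} [Ring K] [AddCommGroup M] [AddCommGroup N]
    [AddCommGroup P] [Module K M] [Module K N] [Module K P] {ι κ : Type*}
    (b₁ : Module.Basis ι K M) (b₂ : Module.Basis κ K N) (e : (M × N) ≃ₗ[K] P) :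
    (Submodule.span ℤ (Set.range ((b₁.prod b₂).map e)) : Set P) =
      e '' ((Submodule.span ℤ (Set.range b₁) : Set M) ×ˢ (Submodule.span ℤ (Set.range b₂))) := by
  have hprod : Set.range (b₁.prod b₂) =
      LinearMap.inl ℤ M N '' Set.range b₁ ∪ LinearMap.inr ℤ M N '' Set.range b₂ := by
    rw [← Set.range_comp, ← Set.range_comp, ← Set.Sum.elim_range]
    congr 1
    ext i <;> cases i <;> simp [Module.Basis.prod_apply]
  have hmap : Set.range ((b₁.prod b₂).map e) =
      (e.toLinearMap.restrictScalars ℤ) '' Set.range (b₁.prod b₂) := by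
    rw [← Set.range_comp]; rfl
  rw [hmap, ← Submodule.map_span, hprod, LinearMap.span_inl_union_inr, Submodule.map_coe]
  rfl

theorem four_le_sq_sub_mul_add_sq {a b : ℝ} (ha : a = 0 ∨ 2 ≤ a) (hb : b = 0 ∨ 2 ≤ b)
    (hab : a ≠ 0 ∨ b ≠ 0) : 4 ≤ a ^ 2 - a * b + b ^ 2 := by
  rcases ha with rfl | ha <;> rcases hb with rfl | hb
  · simp at hab
  all_goals nlinarith

section
variable {m n : ℕ}

variable (m n) in
def padZeros : 𝔼 n →ₗ[ℝ] 𝔼 m where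
  toFun y := WithLp.toLp 2 fun i => if h : (i : ℕ) < n then y ⟨i, h⟩ else 0
  map_add' y z := by ext i; simp only [PiLp.add_apply]; split_ifs <;> simp
  map_smul' c y := by ext i; simp only [PiLp.smul_apply]; split_ifs <;> simp

theorem padZeros_apply (y : 𝔼 n) (i : Fin m) :
    padZeros m n y i = if h : (i : ℕ) < n then y ⟨i, h⟩ else 0 := rfl

theorem norm_padZeros (h : n ≤ m) (y : 𝔼 n) : ‖padZeros m n y‖ = ‖y‖ := by
  refine (sq_eq_sq₀ (norm_nonneg _) (norm_nonneg _)).1 ?_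
  rw [real_norm_sq_eq, real_norm_sq_eq]
  refine (Fintype.sum_of_injective (Fin.castLE h) (Fin.castLE_injective h) _ _ ?_ ?_).symm
  · rintro i hi
    have : ¬ (i : ℕ) < n := fun hlt => hi ⟨⟨i, hlt⟩, rfl⟩
    simp [padZeros_apply, this]
  · intro j
    simp [padZeros_apply]

variable (m n) in
noncomputable def piDivThreeSum : (𝔼 m × 𝔼 n) →ₗ[ℝ] 𝔼 (m + n) :=
  (finAddEquivProd : 𝔼 (m + n) ≃L[ℝ] 𝔼 m × 𝔼 n).symm.toLinearMap ∘ₗ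
    ((LinearMap.fst ℝ _ _ + (1 / 2 : ℝ) • padZeros m n ∘ₗ LinearMap.snd ℝ _ _).prod
      ((√3 / 2 : ℝ) • LinearMap.snd ℝ _ _))

theorem piDivThreeSum_apply (x : 𝔼 m) (y : 𝔼 n) :
    piDivThreeSum m n (x, y) =
      finAddEquivProd.symm (x + (1 / 2 : ℝ) • padZeros m n y, (√3 / 2 : ℝ) • y) :=
  rfl

theorem eq_piDivThreeSum_iff (p : 𝔼 (m + n)) (x : 𝔼 m) (y : 𝔼 n) :
    p = piDivThreeSum m n (x, y) ↔
      (∀ i : Fin m, p (Fin.castAdd n i) = x i + 1 / 2 * padZeros m n y i) ∧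
        ∀ j : Fin n, p (Fin.natAdd m j) = √3 / 2 * y j := by
  rw [piDivThreeSum_apply, ContinuousLinearEquiv.eq_symm_apply, Prod.ext_iff, PiLp.ext_iff,
    PiLp.ext_iff]
  simp

theorem piDivThreeSum_injective : Function.Injective (piDivThreeSum m n) := by
  rw [← LinearMap.ker_eq_bot, LinearMap.ker_eq_bot']
  rintro ⟨x, y⟩ h
  rw [piDivThreeSum_apply, ContinuousLinearEquiv.map_eq_zero_iff, Prod.mk_eq_zero] at h
  have hy : y = 0 := (smul_eq_zero.1 h.2).resolve_left (by positivity)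
  subst hy
  simpa using h.1

variable (m n) in
noncomputable def piDivThreeSumEquiv : (𝔼 m × 𝔼 n) ≃ₗ[ℝ] 𝔼 (m + n) :=
  (piDivThreeSum m n).linearEquivOfInjective piDivThreeSum_injective (by simp [Module.finrank_prod])

theorem norm_sq_piDivThreeSum (x : 𝔼 m) (y : 𝔼 n) :
    ‖piDivThreeSum m n (x, y)‖ ^ 2 = ‖x + (1 / 2 : ℝ) • padZeros m n y‖ ^ 2 + 3 / 4 * ‖y‖ ^ 2 := by
  rw [piDivThreeSum_apply, norm_sq_finAddEquivProd_symm, norm_smul, mul_pow, Real.norm_eq_abs,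
    sq_abs, div_pow, Real.sq_sqrt (by norm_num)]
  norm_num

theorem norm_sq_piDivThreeSum_of_le (h : n ≤ m) (x : 𝔼 m) (y : 𝔼 n) :
    ‖piDivThreeSum m n (x, y)‖ ^ 2 = ‖x‖ ^ 2 + inner ℝ x (padZeros m n y) + ‖y‖ ^ 2 := by
  rw [norm_sq_piDivThreeSum, norm_add_sq_real, real_inner_smul_right, norm_smul, norm_padZeros h,
    Real.norm_of_nonneg (by norm_num : (0 : ℝ) ≤ 1 / 2)]
  ring

variable {Λ₁ : Set (𝔼 m)} {Λ₂ : Set (𝔼 n)}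

theorem two_le_norm_of_mem_image_piDivThreeSum (h : n ≤ m)
    (h₁ : ∀ u ∈ Λ₁, u ≠ 0 → 2 ≤ ‖u‖) (h₂ : ∀ u ∈ Λ₂, u ≠ 0 → 2 ≤ ‖u‖) :
    ∀ p ∈ piDivThreeSum m n '' (Λ₁ ×ˢ Λ₂), p ≠ 0 → 2 ≤ ‖p‖ := by
  rintro _ ⟨⟨x, y⟩, ⟨hx, hy⟩, rfl⟩ hp
  have hxy : x ≠ 0 ∨ y ≠ 0 := by
    by_contra! h0
    simp [h0.1, h0.2, Prod.mk_zero_zero] at hp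
  have hinner : -(‖x‖ * ‖y‖) ≤ inner ℝ x (padZeros m n y) :=
    neg_le_of_abs_le (by simpa [norm_padZeros h] using abs_real_inner_le_norm x (padZeros m n y))
  have h4 : 4 ≤ ‖x‖ ^ 2 - ‖x‖ * ‖y‖ + ‖y‖ ^ 2 :=
    four_le_sq_sub_mul_add_sq
      ((em (x = 0)).imp norm_eq_zero.2 (h₁ x hx))
      ((em (y = 0)).imp norm_eq_zero.2 (h₂ y hy))
      (by simpa using hxy)
  have hsq : 2 ^ 2 ≤ ‖piDivThreeSum m n (x, y)‖ ^ 2 := by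
    rw [norm_sq_piDivThreeSum_of_le h]
    linarith
  exact (pow_le_pow_iff_left₀ zero_le_two (norm_nonneg _) two_ne_zero).1 hsq

theorem piDivThreeSum_surjective : Function.Surjective (piDivThreeSum m n) :=
  (piDivThreeSumEquiv m n).surjective

theorem exists_dist_le_of_mem_image_piDivThreeSum {ρ₁ ρ₂ : ℝ}
    (h₁ : ∀ x : 𝔼 m, ∃ z ∈ Λ₁, dist x z ≤ ρ₁) (h₂ : ∀ y : 𝔼 n, ∃ z ∈ Λ₂, dist y z ≤ ρ₂)
    (q : 𝔼 (m + n)) :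
    ∃ p ∈ piDivThreeSum m n '' (Λ₁ ×ˢ Λ₂), dist q p ≤ √(ρ₁ ^ 2 + 3 / 4 * ρ₂ ^ 2) := by
  obtain ⟨⟨a, b⟩, rfl⟩ := piDivThreeSum_surjective q
  obtain ⟨y, hy, hdy⟩ := h₂ b
  obtain ⟨x, hx, hdx⟩ := h₁ (a + (1 / 2 : ℝ) • padZeros m n (b - y))
  refine ⟨_, ⟨(x, y), ⟨hx, hy⟩, rfl⟩, Real.le_sqrt_of_sq_le ?_⟩
  rw [dist_eq_norm, ← map_sub, Prod.mk_sub_mk, norm_sq_piDivThreeSum]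
  have hdx' : ‖a - x + (1 / 2 : ℝ) • padZeros m n (b - y)‖ ≤ ρ₁ := by
    rwa [dist_eq_norm, add_sub_right_comm] at hdx
  rw [dist_eq_norm] at hdy
  gcongr

end

end PiDivThreeSum

open PiDivThreeSum

/-- The `π/3`-sum of lattices. Let `Λ₁ ⊆ ℝ^{n₁}` and `Λ₂ ⊆ ℝ^{n₂}` be full rank
lattices with packing radius `1` and covering radii `ρ₁, ρ₂`, with `n₁ ≥ n₂`.
Define `Λ = {(x + L(y)/2, (√3/2)y) : x ∈ Λ₁, y ∈ Λ₂} ⊆ ℝ^{n₁+n₂}`, where `L` appends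
zeros. Then `Λ` is a full rank lattice with packing radius at least `1` and covering
radius at most `√(ρ₁² + (3/4)ρ₂²)`. -/
theorem pi_div_three_sum_lattice
    (n₁ n₂ : ℕ) (hn : n₂ ≤ n₁)
    (Λ₁ : Set (EuclideanSpace ℝ (Fin n₁))) (Λ₂ : Set (EuclideanSpace ℝ (Fin n₂)))
    (b₁ : Module.Basis (Fin n₁) ℝ (EuclideanSpace ℝ (Fin n₁)))
    (b₂ : Module.Basis (Fin n₂) ℝ (EuclideanSpace ℝ (Fin n₂)))
    (hΛ₁ : Λ₁ = (Submodule.span ℤ (Set.range b₁) : Submodule ℤ (EuclideanSpace ℝ (Fin n₁))))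
    (hΛ₂ : Λ₂ = (Submodule.span ℤ (Set.range b₂) : Submodule ℤ (EuclideanSpace ℝ (Fin n₂))))
    -- both lattices have packing radius 1
    (hpack₁ : IsGreatest {s : ℝ | ∀ u ∈ Λ₁, u ≠ 0 → 2 * s ≤ ‖u‖} 1)
    (hpack₂ : IsGreatest {s : ℝ | ∀ u ∈ Λ₂, u ≠ 0 → 2 * s ≤ ‖u‖} 1)
    -- covering radii ρ₁, ρ₂
    (ρ₁ ρ₂ : ℝ)
    (hρ₁ : IsLeast {r : ℝ | ∀ x : EuclideanSpace ℝ (Fin n₁), ∃ z ∈ Λ₁, dist x z ≤ r} ρ₁)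
    (hρ₂ : IsLeast {r : ℝ | ∀ x : EuclideanSpace ℝ (Fin n₂), ∃ z ∈ Λ₂, dist x z ≤ r} ρ₂)
    -- L appends zeros
    (L : (Fin n₂ → ℝ) → (Fin n₁ → ℝ))
    (hL : ∀ y i, L y i = if h : (i : ℕ) < n₂ then y ⟨i, h⟩ else 0)
    (Λ : Set (EuclideanSpace ℝ (Fin (n₁ + n₂))))
    (hΛ : Λ = {p | ∃ x ∈ Λ₁, ∃ y ∈ Λ₂,
      (∀ i : Fin n₁, p (Fin.castAdd n₂ i) = x i + (1 / 2) * L y i)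
      ∧ (∀ j : Fin n₂, p (Fin.natAdd n₁ j) = (Real.sqrt 3 / 2) * y j)}) :
    -- Λ is a full rank lattice,
    (∃ b : Module.Basis (Fin (n₁ + n₂)) ℝ (EuclideanSpace ℝ (Fin (n₁ + n₂))),
      Λ = (Submodule.span ℤ (Set.range b) : Submodule ℤ (EuclideanSpace ℝ (Fin (n₁ + n₂)))))
    -- with packing radius at least 1,
    ∧ (∀ p ∈ Λ, p ≠ 0 → 2 ≤ ‖p‖)
    -- and covering radius at most √(ρ₁² + (3/4)ρ₂²)
    ∧ (∀ q : EuclideanSpace ℝ (Fin (n₁ + n₂)), ∃ p ∈ Λ,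
        dist q p ≤ Real.sqrt (ρ₁ ^ 2 + (3 / 4) * ρ₂ ^ 2)) := by
  have hΛ_eq : Λ = piDivThreeSum n₁ n₂ '' (Λ₁ ×ˢ Λ₂) := by
    ext p
    simp only [hΛ, hL, Set.mem_ofPred_eq, Set.mem_image, Set.mem_prod, Prod.exists, exists_and_left,
      eq_comm (b := p), eq_piDivThreeSum_iff, padZeros_apply, and_assoc]
  refine ⟨⟨((b₁.prod b₂).map (piDivThreeSumEquiv n₁ n₂)).reindex finSumFinEquiv, ?_⟩, ?_, ?_⟩
  · rw [Module.Basis.range_reindex, span_range_basis_prod_map, hΛ_eq, hΛ₁, hΛ₂]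
    rfl
  · rw [hΛ_eq]
    exact two_le_norm_of_mem_image_piDivThreeSum hn
      (fun u hu h0 => by simpa using hpack₁.1 u hu h0) (fun u hu h0 => by simpa using hpack₂.1 u hu h0)
  · rw [hΛ_eq]
    exact exists_dist_le_of_mem_image_piDivThreeSum hρ₁.1 hρ₂.1
end

section
/- If Λ₁ ⊆ ℝ^{n₁} and Λ₂ ⊆ ℝ^{n₂} are full rank lattices with covering-packing ratios ρ₁ and ρ₂, then the direct sum Λ₁ ⊕ Λ₂ ⊆ ℝ^{n₁+n₂} is a full rank lattice with covering-packing ratio at most √(ρ₁² + ρ₂²). -/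
/-!
Splitting coordinates identifies `ℝ^{n₁+n₂}` isometrically with the `L²` product of `ℝ^{n₁}` and
`ℝ^{n₂}`, under which `Λ₁ ⊕ Λ₂` becomes `Λ₁ × Λ₂`. A nonzero point of `Λ₁ × Λ₂` has a nonzero
component, which is at most as long as the point, so the packing radius is the smaller of the two.
Approximating both components of a point separately gives the covering bound `√(R₁² + R₂²)`.
The covering radius itself exists because the lattice is closed in a proper space: the distance to
it is attained at every point, so the covering radius is the supremum of these distances.
-/

open Submodule Set Metric WithLp

section Radii

variable {E F X Y : Type*}

def packingRadii [Norm E] [Zero E] (Λ : Set E) : Set ℝ :=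
  {s | ∀ u ∈ Λ, u ≠ 0 → 2 * s ≤ ‖u‖}

def coveringRadii [Dist X] (Λ : Set X) : Set ℝ :=
  {r | ∀ x, ∃ z ∈ Λ, dist x z ≤ r}

theorem packingRadii_preimage_linearIsometryEquiv {R : Type*} [Semiring R]
    [NormedAddCommGroup E] [NormedAddCommGroup F] [Module R E] [Module R F]
    (e : E ≃ₗᵢ[R] F) (Λ : Set F) : packingRadii (e ⁻¹' Λ) = packingRadii Λ := by
  ext s
  simp only [packingRadii, mem_ofPred_eq, mem_preimage, e.surjective.forall (p := fun v =>
    v ∈ Λ → v ≠ 0 → 2 * s ≤ ‖v‖), ne_eq, map_eq_zero_iff _ e.injective, e.norm_map]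

theorem coveringRadii_preimage_of_isometry [PseudoMetricSpace X] [PseudoMetricSpace Y]
    {e : X → Y} (he : Isometry e) (he' : Function.Surjective e) (Λ : Set Y) :
    coveringRadii (e ⁻¹' Λ) = coveringRadii Λ := by
  ext r
  simp only [coveringRadii, mem_ofPred_eq, mem_preimage, he'.forall, he'.exists, he.dist_eq]

theorem coveringRadii_eq_upperBounds_infDist [PseudoMetricSpace X] [ProperSpace X] {Λ : Set X}
    (hΛ : IsClosed Λ) (hne : Λ.Nonempty) :
    coveringRadii Λ = upperBounds (range (infDist · Λ)) := by
  ext r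
  simp only [coveringRadii, mem_upperBounds, forall_mem_range, mem_ofPred_eq]
  refine forall_congr' fun x => ⟨fun ⟨z, hz, hxz⟩ => (infDist_le_dist_of_mem hz).trans hxz,
    fun h => ?_⟩
  obtain ⟨z, hz, hxz⟩ := hΛ.exists_infDist_eq_dist hne x
  exact ⟨z, hz, hxz ▸ h⟩

theorem exists_isLeast_coveringRadii [PseudoMetricSpace X] [ProperSpace X] [Nonempty X]
    {Λ : Set X} (hΛ : IsClosed Λ) (hcov : (coveringRadii Λ).Nonempty) :
    ∃ R, IsLeast (coveringRadii Λ) R := by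
  obtain ⟨r, hr⟩ := hcov
  obtain ⟨z, hz, -⟩ := hr (Classical.arbitrary X)
  rw [coveringRadii_eq_upperBounds_infDist hΛ ⟨z, hz⟩] at hr ⊢
  exact ⟨_, isLUB_csSup (range_nonempty _) ⟨r, hr⟩⟩

theorem isGreatest_packingRadii_prod {p : ENNReal} [Fact (1 ≤ p)]
    [NormedAddCommGroup E] [NormedAddCommGroup F] {Λ₁ : Set E} {Λ₂ : Set F} {r₁ r₂ : ℝ}
    (h0₁ : (0 : E) ∈ Λ₁) (h0₂ : (0 : F) ∈ Λ₂)
    (h₁ : IsGreatest (packingRadii Λ₁) r₁) (h₂ : IsGreatest (packingRadii Λ₂) r₂) :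
    IsGreatest (packingRadii (ofLp ⁻¹' (Λ₁ ×ˢ Λ₂) : Set (WithLp p (E × F)))) (min r₁ r₂) := by
  refine ⟨fun u ⟨hu₁, hu₂⟩ hu0 => ?_,
    fun s hs => le_min (h₁.2 fun v hv hv0 => ?_) (h₂.2 fun v hv hv0 => ?_)⟩
  · by_cases hfst : u.fst = 0
    · have hsnd : u.snd ≠ 0 := fun hsnd => hu0 ((ofLp_eq_zero p).1 (Prod.ext hfst hsnd))
      calc 2 * min r₁ r₂ ≤ 2 * r₂ := by gcongr; exact min_le_right _ _
        _ ≤ ‖u.snd‖ := h₂.1 _ hu₂ hsnd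
        _ ≤ ‖u‖ := WithLp.norm_snd_le E u
    · calc 2 * min r₁ r₂ ≤ 2 * r₁ := by gcongr; exact min_le_left _ _
        _ ≤ ‖u.fst‖ := h₁.1 _ hu₁ hfst
        _ ≤ ‖u‖ := WithLp.norm_fst_le E u
  · simpa using hs (toLp p (v, 0)) ⟨hv, h0₂⟩ (by simpa using hv0)
  · simpa using hs (toLp p (0, v)) ⟨h0₁, hv⟩ (by simpa using hv0)

theorem sqrt_mem_coveringRadii_prod [SeminormedAddCommGroup E] [SeminormedAddCommGroup F]
    {Λ₁ : Set E} {Λ₂ : Set F} {R₁ R₂ : ℝ}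
    (h₁ : R₁ ∈ coveringRadii Λ₁) (h₂ : R₂ ∈ coveringRadii Λ₂) :
    √(R₁ ^ 2 + R₂ ^ 2) ∈ coveringRadii (ofLp ⁻¹' (Λ₁ ×ˢ Λ₂) : Set (WithLp 2 (E × F))) := by
  intro q
  obtain ⟨z₁, hz₁, hd₁⟩ := h₁ q.fst
  obtain ⟨z₂, hz₂, hd₂⟩ := h₂ q.snd
  refine ⟨toLp 2 (z₁, z₂), ⟨hz₁, hz₂⟩, ?_⟩
  rw [prod_dist_eq_of_L2]
  gcongr
  · exact hd₁
  · exact hd₂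

end Radii

theorem span_int_range_basis_prod {K M N ι κ : Type*} [Ring K] [AddCommGroup M] [Module K M]
    [AddCommGroup N] [Module K N] (b : Module.Basis ι K M) (b' : Module.Basis κ K N) :
    span ℤ (range (b.prod b')) = (span ℤ (range b)).prod (span ℤ (range b')) := by
  rw [← LinearMap.span_inl_union_inr, ← range_comp, ← range_comp, ← Set.Sum.elim_range]
  congr 2
  ext (i | j) <;> simp

namespace EuclideanSpace

variable {𝕜 : Type*} [RCLike 𝕜] {n₁ n₂ : ℕ}

variable (𝕜 n₁ n₂) in
noncomputable def finAddEquivWithLpProd :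
    EuclideanSpace 𝕜 (Fin (n₁ + n₂)) ≃ₗᵢ[𝕜]
      WithLp 2 (EuclideanSpace 𝕜 (Fin n₁) × EuclideanSpace 𝕜 (Fin n₂)) :=
  (LinearIsometryEquiv.piLpCongrLeft 2 𝕜 𝕜 finSumFinEquiv.symm).trans
    (PiLp.sumPiLpEquivProdLpPiLp 2 _)

def directSum (Λ₁ : Set (EuclideanSpace 𝕜 (Fin n₁))) (Λ₂ : Set (EuclideanSpace 𝕜 (Fin n₂))) :
    Set (EuclideanSpace 𝕜 (Fin (n₁ + n₂))) :=
  {p | ∃ x ∈ Λ₁, ∃ y ∈ Λ₂,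
    (∀ i : Fin n₁, p (Fin.castAdd n₂ i) = x i) ∧ (∀ j : Fin n₂, p (Fin.natAdd n₁ j) = y j)}

theorem directSum_eq_preimage (Λ₁ : Set (EuclideanSpace 𝕜 (Fin n₁)))
    (Λ₂ : Set (EuclideanSpace 𝕜 (Fin n₂))) :
    directSum Λ₁ Λ₂ = finAddEquivWithLpProd 𝕜 n₁ n₂ ⁻¹' (ofLp ⁻¹' (Λ₁ ×ˢ Λ₂)) := by
  ext p
  constructor
  · rintro ⟨x, hx, y, hy, hpx, hpy⟩
    have hx' : (ofLp (finAddEquivWithLpProd 𝕜 n₁ n₂ p)).1 = x := PiLp.ext hpx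
    have hy' : (ofLp (finAddEquivWithLpProd 𝕜 n₁ n₂ p)).2 = y := PiLp.ext hpy
    exact ⟨hx' ▸ hx, hy' ▸ hy⟩
  · rintro ⟨hx, hy⟩
    exact ⟨_, hx, _, hy, fun _ => rfl, fun _ => rfl⟩

theorem exists_basis_span_int_eq_directSum
    (b₁ : Module.Basis (Fin n₁) 𝕜 (EuclideanSpace 𝕜 (Fin n₁)))
    (b₂ : Module.Basis (Fin n₂) 𝕜 (EuclideanSpace 𝕜 (Fin n₂))) :
    ∃ b : Module.Basis (Fin (n₁ + n₂)) 𝕜 (EuclideanSpace 𝕜 (Fin (n₁ + n₂))),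
      directSum (span ℤ (range b₁) : Set (EuclideanSpace 𝕜 (Fin n₁))) (span ℤ (range b₂)) =
        (span ℤ (range b) : Set (EuclideanSpace 𝕜 (Fin (n₁ + n₂)))) := by
  let L := (WithLp.linearEquiv 2 𝕜 _).symm ≪≫ₗ (finAddEquivWithLpProd 𝕜 n₁ n₂).symm.toLinearEquiv
  refine ⟨((b₁.prod b₂).map L).reindex finSumFinEquiv, ?_⟩
  rw [Module.Basis.range_reindex, ← ZSpan.map, span_int_range_basis_prod, directSum_eq_preimage]
  ext p
  rw [SetLike.mem_coe, mem_map_equiv]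
  rfl

end EuclideanSpace

/-- If `Λ₁ ⊆ ℝ^{n₁}` and `Λ₂ ⊆ ℝ^{n₂}` are full rank lattices with covering-packing
ratios `ρ₁` and `ρ₂` (both packing radii normalized to `1`), then the direct sum `Λ₁ ⊕ Λ₂ ⊆ ℝ^{n₁+n₂}` is a full rank lattice
with covering-packing ratio at most `√(ρ₁² + ρ₂²)`. -/
theorem direct_sum_covering_packing_ratio
    (n₁ n₂ : ℕ)
    (Λ₁ : Set (EuclideanSpace ℝ (Fin n₁))) (Λ₂ : Set (EuclideanSpace ℝ (Fin n₂)))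
    (b₁ : Module.Basis (Fin n₁) ℝ (EuclideanSpace ℝ (Fin n₁)))
    (b₂ : Module.Basis (Fin n₂) ℝ (EuclideanSpace ℝ (Fin n₂)))
    (hΛ₁ : Λ₁ = (Submodule.span ℤ (Set.range b₁) : Submodule ℤ (EuclideanSpace ℝ (Fin n₁))))
    (hΛ₂ : Λ₂ = (Submodule.span ℤ (Set.range b₂) : Submodule ℤ (EuclideanSpace ℝ (Fin n₂))))
    -- packing radii normalized to 1, covering radii R₁, R₂
    (R₁ R₂ ρ₁ ρ₂ : ℝ)
    (hr₁ : IsGreatest {s : ℝ | ∀ u ∈ Λ₁, u ≠ 0 → 2 * s ≤ ‖u‖} 1)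
    (hr₂ : IsGreatest {s : ℝ | ∀ u ∈ Λ₂, u ≠ 0 → 2 * s ≤ ‖u‖} 1)
    (hR₁ : IsLeast {r : ℝ | ∀ x : EuclideanSpace ℝ (Fin n₁), ∃ z ∈ Λ₁, dist x z ≤ r} R₁)
    (hR₂ : IsLeast {r : ℝ | ∀ x : EuclideanSpace ℝ (Fin n₂), ∃ z ∈ Λ₂, dist x z ≤ r} R₂)
    -- covering-packing ratios
    (hρ₁ : ρ₁ = R₁ / 1) (hρ₂ : ρ₂ = R₂ / 1)
    -- Λ is the direct sum Λ₁ ⊕ Λ₂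
    (Λ : Set (EuclideanSpace ℝ (Fin (n₁ + n₂))))
    (hΛ : Λ = {p | ∃ x ∈ Λ₁, ∃ y ∈ Λ₂,
      (∀ i : Fin n₁, p (Fin.castAdd n₂ i) = x i)
      ∧ (∀ j : Fin n₂, p (Fin.natAdd n₁ j) = y j)}) :
    -- Λ is a full rank lattice
    (∃ b : Module.Basis (Fin (n₁ + n₂)) ℝ (EuclideanSpace ℝ (Fin (n₁ + n₂))),
      Λ = (Submodule.span ℤ (Set.range b) : Submodule ℤ (EuclideanSpace ℝ (Fin (n₁ + n₂)))))
    -- with covering-packing ratio at most √(ρ₁² + ρ₂²)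
    ∧ (∃ r R : ℝ,
        IsGreatest {s : ℝ | ∀ p ∈ Λ, p ≠ 0 → 2 * s ≤ ‖p‖} r
        ∧ IsLeast {s : ℝ | ∀ q : EuclideanSpace ℝ (Fin (n₁ + n₂)), ∃ p ∈ Λ, dist q p ≤ s} R
        ∧ R ≤ Real.sqrt (ρ₁ ^ 2 + ρ₂ ^ 2) * r) := by
  subst hΛ₁ hΛ₂ hρ₁ hρ₂
  obtain ⟨b, hb⟩ := EuclideanSpace.exists_basis_span_int_eq_directSum b₁ b₂
  have hΛb : Λ = span ℤ (range b) := hΛ.trans hb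
  have hΛsplit : Λ = EuclideanSpace.finAddEquivWithLpProd ℝ n₁ n₂ ⁻¹'
      (ofLp ⁻¹' ((span ℤ (range b₁) : Set _) ×ˢ (span ℤ (range b₂) : Set _))) :=
    hΛ.trans (EuclideanSpace.directSum_eq_preimage _ _)
  have hpack : IsGreatest (packingRadii Λ) 1 := by
    rw [hΛsplit, packingRadii_preimage_linearIsometryEquiv]
    simpa using isGreatest_packingRadii_prod (zero_mem _) (zero_mem _) hr₁ hr₂
  have hcov : √(R₁ ^ 2 + R₂ ^ 2) ∈ coveringRadii Λ := by
    rw [hΛsplit, coveringRadii_preimage_of_isometry (LinearIsometryEquiv.isometry _)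
      (LinearIsometryEquiv.surjective _)]
    exact sqrt_mem_coveringRadii_prod hR₁.1 hR₂.1
  have hclosed : IsClosed Λ := by
    rw [hΛb, ← coe_toAddSubgroup]
    exact AddSubgroup.isClosed_of_discrete
  obtain ⟨R, hR⟩ := exists_isLeast_coveringRadii hclosed ⟨_, hcov⟩
  exact ⟨⟨b, hΛb⟩, 1, R, hpack, hR, by simpa using hR.2 hcov⟩
end
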